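/- arXiv:2510.20841 — 12 statements merged into one kernel-verified Lean document; each statement's English description precedes it below -/
import Mathlib

section
/- For all real x with 0 < x ≤ π, (π² − x²)/(π² + x²) ≤ sin(x)/x. -/
open Real

private lemma aux_mono (f : ℝ → ℝ) (hf : Differentiable ℝ f)
    (hd : ∀ x ∈ Set.Ioi (0:ℝ), 0 ≤ deriv f x) {x : ℝ} (hx : 0 ≤ x) : f 0 ≤ f x := by
  have := monotoneOn_of_deriv_nonneg (convex_Ici 0) hf.continuous.continuousOn
    hf.differentiableOn (by simpa [interior_Ici] using hd)
  exact this (Set.self_mem_Ici) hx hx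

private lemma sin_lb1 {x : ℝ} (hx : 0 ≤ x) : x - x ^ 3 / 6 ≤ Real.sin x := by
  have h := aux_mono (fun x => Real.sin x - x + x ^ 3 / 6)
    (by fun_prop) (fun y _ => ?_) hx
  · simp only [Real.sin_zero] at h; linarith
  · have hd : HasDerivAt (fun x : ℝ => Real.sin x - x + x ^ 3 / 6)
        (Real.cos y - 1 + (3:ℕ) * y ^ 2 / 6) y :=
      ((Real.hasDerivAt_sin y).sub (hasDerivAt_id y)).add ((hasDerivAt_pow 3 y).div_const 6)
    rw [hd.deriv]
    push_cast
    nlinarith [Real.one_sub_sq_div_two_le_cos (x := y)]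

private lemma cos_ub1 {x : ℝ} (hx : 0 ≤ x) : Real.cos x ≤ 1 - x ^ 2 / 2 + x ^ 4 / 24 := by
  have h := aux_mono (fun x => 1 - x ^ 2 / 2 + x ^ 4 / 24 - Real.cos x)
    (by fun_prop) (fun y hy => ?_) hx
  · simp only [Real.cos_zero] at h; push_cast at h; nlinarith [h]
  · have hd : HasDerivAt (fun x : ℝ => 1 - x ^ 2 / 2 + x ^ 4 / 24 - Real.cos x)
        (0 - (2:ℕ) * y ^ 1 / 2 + (4:ℕ) * y ^ 3 / 24 - -Real.sin y) y :=
      (((hasDerivAt_const y (1:ℝ)).sub ((hasDerivAt_pow 2 y).div_const 2)).add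
        ((hasDerivAt_pow 4 y).div_const 24)).sub (Real.hasDerivAt_cos y)
    rw [hd.deriv]
    push_cast
    have := sin_lb1 (le_of_lt hy)
    nlinarith [this]

private lemma sin_ub1 {x : ℝ} (hx : 0 ≤ x) :
    Real.sin x ≤ x - x ^ 3 / 6 + x ^ 5 / 120 := by
  have h := aux_mono (fun x => x - x ^ 3 / 6 + x ^ 5 / 120 - Real.sin x)
    (by fun_prop) (fun y hy => ?_) hx
  · simp only [Real.sin_zero] at h; push_cast at h; nlinarith [h]
  · have hd : HasDerivAt (fun x : ℝ => x - x ^ 3 / 6 + x ^ 5 / 120 - Real.sin x)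
        (1 - (3:ℕ) * y ^ 2 / 6 + (5:ℕ) * y ^ 4 / 120 - Real.cos y) y :=
      (((hasDerivAt_id y).sub ((hasDerivAt_pow 3 y).div_const 6)).add
        ((hasDerivAt_pow 5 y).div_const 120)).sub (Real.hasDerivAt_sin y)
    rw [hd.deriv]
    push_cast
    have := cos_ub1 (le_of_lt hy)
    nlinarith [this]

private lemma cos_lb2 {x : ℝ} (hx : 0 ≤ x) :
    1 - x ^ 2 / 2 + x ^ 4 / 24 - x ^ 6 / 720 ≤ Real.cos x := by
  have h := aux_mono (fun x => Real.cos x - (1 - x ^ 2 / 2 + x ^ 4 / 24 - x ^ 6 / 720))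
    (by fun_prop) (fun y hy => ?_) hx
  · simp only [Real.cos_zero] at h; push_cast at h; nlinarith [h]
  · have hd : HasDerivAt (fun x : ℝ => Real.cos x - (1 - x ^ 2 / 2 + x ^ 4 / 24 - x ^ 6 / 720))
        (-Real.sin y - (0 - (2:ℕ) * y ^ 1 / 2 + (4:ℕ) * y ^ 3 / 24 - (6:ℕ) * y ^ 5 / 720)) y :=
      (Real.hasDerivAt_cos y).sub
        ((((hasDerivAt_const y (1:ℝ)).sub ((hasDerivAt_pow 2 y).div_const 2)).add
          ((hasDerivAt_pow 4 y).div_const 24)).sub ((hasDerivAt_pow 6 y).div_const 720))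
    rw [hd.deriv]
    push_cast
    have := sin_ub1 (le_of_lt hy)
    nlinarith [this]

private lemma sin_lb2 {x : ℝ} (hx : 0 ≤ x) :
    x - x ^ 3 / 6 + x ^ 5 / 120 - x ^ 7 / 5040 ≤ Real.sin x := by
  have h := aux_mono (fun x => Real.sin x - (x - x ^ 3 / 6 + x ^ 5 / 120 - x ^ 7 / 5040))
    (by fun_prop) (fun y hy => ?_) hx
  · simp only [Real.sin_zero] at h; push_cast at h; nlinarith [h]
  · have hd : HasDerivAt
        (fun x : ℝ => Real.sin x - (x - x ^ 3 / 6 + x ^ 5 / 120 - x ^ 7 / 5040))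
        (Real.cos y - (1 - (3:ℕ) * y ^ 2 / 6 + (5:ℕ) * y ^ 4 / 120 - (7:ℕ) * y ^ 6 / 5040)) y :=
      (Real.hasDerivAt_sin y).sub
        ((((hasDerivAt_id y).sub ((hasDerivAt_pow 3 y).div_const 6)).add
          ((hasDerivAt_pow 5 y).div_const 120)).sub ((hasDerivAt_pow 7 y).div_const 5040))
    rw [hd.deriv]
    push_cast
    have := cos_lb2 (le_of_lt hy)
    nlinarith [this]

theorem redheffer_sin (x : ℝ) (hx : 0 < x) (hxpi : x ≤ π) :
    (π ^ 2 - x ^ 2) / (π ^ 2 + x ^ 2) ≤ Real.sin x / x := by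
  have hpi := Real.pi_gt_d6
  have hpi' := Real.pi_lt_d2
  have hden : (0:ℝ) < π ^ 2 + x ^ 2 := by positivity
  rw [div_le_div_iff₀ hden hx]
  rcases le_or_gt x 2.2 with hc | hc
  · have h5 := sin_lb2 hx.le
    have hx2 : x ^ 2 ≤ 4.84 := by nlinarith
    have hq : 0 ≤ (2 - π ^ 2 / 6) + (π ^ 2 / 120 - 1 / 6) * x ^ 2
        + (1 / 120 - π ^ 2 / 5040) * x ^ 4 - x ^ 6 / 5040 := by
      nlinarith [sq_nonneg (x ^ 2), mul_nonneg (sq_nonneg x) (sub_nonneg.2 hx2),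
        mul_nonneg (mul_nonneg (sq_nonneg x) (sq_nonneg x)) (sub_nonneg.2 hx2),
        sq_nonneg (x ^ 2 - 4.84), sq_nonneg π]
    have hx3 : 0 < x ^ 3 := by positivity
    nlinarith [mul_le_mul_of_nonneg_right h5 hden.le,
      mul_nonneg hq hx3.le]
  · set t := π - x with htdef
    have ht0 : 0 ≤ t := by linarith
    have hs : Real.sin x = Real.sin t := (Real.sin_pi_sub x).symm
    have h1 := sin_lb1 ht0
    have hkey : t * (π ^ 2 + x ^ 2) ≤ 6 * π := by nlinarith [sq_nonneg (x - π), sq_nonneg x]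
    rw [hs]
    nlinarith [mul_le_mul_of_nonneg_right h1 hden.le,
      mul_le_mul_of_nonneg_left hkey (by positivity : (0:ℝ) ≤ t ^ 2 / 6)]
end

section
/- For all real x with 0 < x < π, the function k(x) := x²(π − x)² − (π² − πx + x²)·sin²(x) is strictly negative. -/
open Real

/-- Expanding in `y` and `p - 2 * y ≥ 0`, every coefficient is a polynomial in `p ^ 2` that is
positive for `0 < p ^ 2 ≤ 10`. -/
lemma sq_mul_sq_lt_mul_sub_cube_sq {p y : ℝ} (hp : p ^ 2 ≤ 10) (hy : 0 < y) (hyp : 2 * y ≤ p) :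
    y ^ 2 * (p - y) ^ 2 < (p ^ 2 - p * y + y ^ 2) * (y - y ^ 3 / 6) ^ 2 := by
  set u := p - 2 * y with hu_def
  have hu : 0 ≤ u := by linarith
  have hp0 : 0 < p := by linarith
  have hq : 0 < p ^ 2 := by positivity
  have c4 : 0 ≤ 10 * p ^ 2 - p ^ 4 / 3 := by nlinarith
  have c5 : 0 ≤ 40 * p ^ 2 - 7 * p ^ 4 / 3 := by nlinarith
  have c6 : 0 ≤ 80 * p ^ 2 - 19 * p ^ 4 / 3 + p ^ 6 / 36 := by nlinarith [mul_pos hq hq]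
  have c7 : 0 ≤ 80 * p ^ 2 - 8 * p ^ 4 + p ^ 6 / 12 := by nlinarith [mul_pos hq hq]
  have c8 : 0 < 32 * p ^ 2 - 4 * p ^ 4 + p ^ 6 / 12 := by nlinarith [mul_pos hq hq]
  have expansion : p ^ 6 * ((p ^ 2 - p * y + y ^ 2) * (y - y ^ 3 / 6) ^ 2 - y ^ 2 * (p - y) ^ 2)
      = p ^ 2 * (y ^ 3 * u ^ 5)
        + (10 * p ^ 2 - p ^ 4 / 3) * (y ^ 4 * u ^ 4)
        + (40 * p ^ 2 - 7 * p ^ 4 / 3) * (y ^ 5 * u ^ 3)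
        + (80 * p ^ 2 - 19 * p ^ 4 / 3 + p ^ 6 / 36) * (y ^ 6 * u ^ 2)
        + (80 * p ^ 2 - 8 * p ^ 4 + p ^ 6 / 12) * (y ^ 7 * u)
        + (32 * p ^ 2 - 4 * p ^ 4 + p ^ 6 / 12) * y ^ 8 := by
    rw [hu_def]; ring
  have hpos : 0 < p ^ 6 * ((p ^ 2 - p * y + y ^ 2) * (y - y ^ 3 / 6) ^ 2 - y ^ 2 * (p - y) ^ 2) := by
    rw [expansion]
    have := mul_nonneg c4 (by positivity : 0 ≤ y ^ 4 * u ^ 4)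
    have := mul_nonneg c5 (by positivity : 0 ≤ y ^ 5 * u ^ 3)
    have := mul_nonneg c6 (by positivity : 0 ≤ y ^ 6 * u ^ 2)
    have := mul_nonneg c7 (by positivity : 0 ≤ y ^ 7 * u)
    have := mul_pos c8 (pow_pos hy 8)
    have : 0 ≤ p ^ 2 * (y ^ 3 * u ^ 5) := by positivity
    linarith
  have := (mul_pos_iff_of_pos_left (pow_pos hp0 6)).1 hpos
  linarith

lemma k_neg_of_le_pi_div_two {x : ℝ} (hx : 0 < x) (hx2 : x ≤ π / 2) :
    x ^ 2 * (π - x) ^ 2 - (π ^ 2 - π * x + x ^ 2) * sin x ^ 2 < 0 := by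
  have hpi : π ^ 2 ≤ 10 := by nlinarith [pi_lt_d2, pi_pos]
  have hxsq : x ^ 2 < 6 := by nlinarith
  have htaylor : 0 < x - x ^ 3 / 6 := by nlinarith [mul_pos hx (sub_pos.2 hxsq)]
  have hsq : (x - x ^ 3 / 6) ^ 2 < sin x ^ 2 :=
    pow_lt_pow_left₀ (sin_gt_sub_cube hx) htaylor.le two_ne_zero
  have hfac : 0 < π ^ 2 - π * x + x ^ 2 := by nlinarith
  linarith [sq_mul_sq_lt_mul_sub_cube_sq hpi hx (by linarith), mul_lt_mul_of_pos_left hsq hfac]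

theorem k_neg (x : ℝ) (hx : 0 < x) (hxpi : x < π) :
    x ^ 2 * (π - x) ^ 2 - (π ^ 2 - π * x + x ^ 2) * Real.sin x ^ 2 < 0 := by
  rcases le_or_gt x (π / 2) with hx2 | hx2
  · exact k_neg_of_le_pi_div_two hx hx2
  · -- the expression is invariant under `x ↦ π - x`
    have h := k_neg_of_le_pi_div_two (x := π - x) (by linarith) (by linarith)
    rw [sin_pi_sub] at h
    linarith
end

section
/- For all real x with 0 < x < π, ((π² − x²)/(π² + x²))^(π²/12) ≥ sin(x)/x; that is, sin(x)/x is bounded above by that power of the Redheffer ratio. -/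
/-!
Write `t = x / π`. Euler's product `sin (π t) / (π t) = ∏ₙ (1 - t² / n²)` gives, after keeping the
factor `n = 1` and bounding `log (1 - t² / n²) ≤ -t² / n²` for `n ≥ 2`,
`log (sin x / x) ≤ log (1 - t²) - (ζ(2) - 1) t²`. With `c = π² / 12` we have `2c - 1 = ζ(2) - 1`,
and the right side is at most `c log ((1 - t²) / (1 + t²))` because
`c (log (1 - s) - log (1 + s)) - log (1 - s) + (2c - 1) s` vanishes at `0` and has derivative
`s (1 - (2c - 1) s) / (1 - s²) ≥ 0` on `[0, 1)` as soon as `c ≤ 1`.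
-/

open Real Filter Finset Topology Set

lemma log_le_of_tendsto_prod_of_log_le {a b : ℕ → ℝ} {L B : ℝ} (ha : ∀ j, a j ≠ 0) (hL : L ≠ 0)
    (hprod : Tendsto (fun n ↦ ∏ j ∈ range n, a j) atTop (𝓝 L)) (hab : ∀ j, log (a j) ≤ b j)
    (hb : HasSum b B) : log L ≤ B := by
  refine le_of_tendsto_of_tendsto' (hprod.log hL) hb.tendsto_sum_nat fun n ↦ ?_
  rw [log_prod fun j _ ↦ ha j]
  exact sum_le_sum fun j _ ↦ hab j

lemma hasSum_one_div_nat_add_one_sq :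
    HasSum (fun j : ℕ ↦ 1 / ((j : ℝ) + 1) ^ 2) (π ^ 2 / 6) := by
  simpa using (hasSum_nat_add_iff' 1).mpr hasSum_zeta_two

lemma one_sub_sq_div_add_one_sq_pos {t : ℝ} (ht : t ^ 2 < 1) (j : ℕ) :
    0 < 1 - t ^ 2 / ((j : ℝ) + 1) ^ 2 := by
  have hj : (1 : ℝ) ≤ ((j : ℝ) + 1) ^ 2 := one_le_pow₀ (by linarith [j.cast_nonneg (α := ℝ)])
  linarith [div_le_self (sq_nonneg t) hj]

lemma log_sin_pi_mul_div_le {t : ℝ} (ht0 : 0 < t) (ht1 : t < 1) :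
    log (sin (π * t) / (π * t)) ≤ log (1 - t ^ 2) - (π ^ 2 / 6 - 1) * t ^ 2 := by
  have ht : t ^ 2 < 1 := by nlinarith
  have hsinc : 0 < sin (π * t) / (π * t) := by
    have hπ := pi_pos
    exact div_pos (sin_pos_of_pos_of_lt_pi (by positivity) (by nlinarith)) (by positivity)
  have hprod : Tendsto (fun n ↦ ∏ j ∈ range n, (1 - t ^ 2 / ((j : ℝ) + 1) ^ 2)) atTop
      (𝓝 (sin (π * t) / (π * t))) :=
    ((tendsto_euler_sin_prod t).div_const (π * t)).congr fun n ↦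
      mul_div_cancel_left₀ _ (by positivity)
  have hb := (hasSum_one_div_nat_add_one_sq.mul_left (-t ^ 2)).update 0 (log (1 - t ^ 2))
  refine (log_le_of_tendsto_prod_of_log_le (fun j ↦ (one_sub_sq_div_add_one_sq_pos ht j).ne')
    hsinc.ne' hprod (fun j ↦ ?_) hb).trans_eq (by ring)
  rcases eq_or_ne j 0 with rfl | hj
  · simp
  · rw [Function.update_of_ne hj]
    have hsub : -t ^ 2 * (1 / ((j : ℝ) + 1) ^ 2) = (1 - t ^ 2 / ((j : ℝ) + 1) ^ 2) - 1 := by ring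
    exact hsub ▸ log_le_sub_one_of_pos (one_sub_sq_div_add_one_sq_pos ht j)
lemma hasDerivAt_log_one_sub_sub {c u : ℝ} (hu : u ∈ Ioo (-1 : ℝ) 1) :
    HasDerivAt (fun u ↦ c * (log (1 - u) - log (1 + u)) - log (1 - u) + (2 * c - 1) * u)
      (u * (1 - (2 * c - 1) * u) / (1 - u ^ 2)) u := by
  obtain ⟨hu0, hu1⟩ := hu
  have hsub : (1 : ℝ) - u ≠ 0 := by linarith
  have hadd : (1 : ℝ) + u ≠ 0 := by linarith
  have hlog_sub := ((hasDerivAt_id u).const_sub 1).log hsub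
  have hlog_add := ((hasDerivAt_id u).const_add 1).log hadd
  refine ((((hlog_sub.sub hlog_add).const_mul c).sub hlog_sub).add
    ((hasDerivAt_id u).const_mul (2 * c - 1))).congr_deriv ?_
  have hsq : (1 : ℝ) - u ^ 2 ≠ 0 := by nlinarith
  simp only [id]
  field_simp
  ring

lemma log_one_sub_sub_le_mul_log_div {c s : ℝ} (hc : c ≤ 1) (hs0 : 0 ≤ s) (hs1 : s < 1) :
    log (1 - s) - (2 * c - 1) * s ≤ c * log ((1 - s) / (1 + s)) := by
  set G : ℝ → ℝ := fun u ↦ c * (log (1 - u) - log (1 + u)) - log (1 - u) + (2 * c - 1) * u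
  have hderiv : ∀ u ∈ Ico (0 : ℝ) 1, HasDerivAt G (u * (1 - (2 * c - 1) * u) / (1 - u ^ 2)) u :=
    fun u hu ↦ hasDerivAt_log_one_sub_sub ⟨by linarith [hu.1], hu.2⟩
  have hmono : MonotoneOn G (Ico 0 1) := by
    refine monotoneOn_of_hasDerivWithinAt_nonneg (convex_Ico 0 1)
      (fun u hu ↦ (hderiv u hu).continuousAt.continuousWithinAt)
      (fun u hu ↦ (hderiv u (interior_subset hu)).hasDerivWithinAt) fun u hu ↦ ?_
    rw [interior_Ico] at hu
    obtain ⟨hu0, hu1⟩ := hu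
    have : 0 < 1 - u ^ 2 := by nlinarith
    have : 0 ≤ 1 - (2 * c - 1) * u := by nlinarith
    positivity
  have hG := hmono ⟨le_rfl, zero_lt_one⟩ ⟨hs0, hs1⟩ hs0
  simp only [G, sub_zero, add_zero, log_one, mul_zero] at hG
  rw [log_div (by linarith) (by linarith)]
  linarith

theorem zhu_sun_upper (x : ℝ) (hx : 0 < x) (hxpi : x < π) :
    Real.sin x / x ≤ ((π ^ 2 - x ^ 2) / (π ^ 2 + x ^ 2)) ^ (π ^ 2 / 12) := by
  have hπ := pi_pos
  set t := x / π
  have hxt : π * t = x := mul_div_cancel₀ x hπ.ne'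
  have ht0 : 0 < t := div_pos hx hπ
  have ht1 : t < 1 := (div_lt_one hπ).mpr hxpi
  have hsinc := log_sin_pi_mul_div_le ht0 ht1
  rw [hxt] at hsinc
  have hc : π ^ 2 / 12 ≤ 1 := by nlinarith [pi_lt_d2]
  have hratio := log_one_sub_sub_le_mul_log_div hc (sq_nonneg t) (by nlinarith)
  have hratio_eq : (1 - t ^ 2) / (1 + t ^ 2) = (π ^ 2 - x ^ 2) / (π ^ 2 + x ^ 2) := by
    rw [← hxt]
    field_simp
  rw [hratio_eq] at hratio
  rw [le_rpow_iff_log_le (div_pos (sin_pos_of_pos_of_lt_pi hx hxpi) hx) (div_pos (by nlinarith) (by positivity))]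
  linarith
end

section
/- For every real β ≥ 1 and all x with 0 < x < π, ((π² − x²)/(π² + x²))^β ≤ sin(x)/x. -/
/-!
For β ≥ 1 the base `(π² - x²)/(π² + x²)` lies in `[0, 1]`, so raising it to the power β only
decreases it, and it suffices to prove Redheffer's inequality (β = 1). Clearing denominators, this
follows from the Taylor bound `sin t ≥ t - t³/6 + t⁵/120 - t⁷/5040` (t ≥ 0), applied at `t = x`
when `x ≤ π/2` and at `t = π - x` otherwise. In both cases what remains is a polynomial inequality
with enough slack that the bounds `3.14 < π < 3.15` settle it.
-/

open Real

theorem le_of_hasDerivAt_le_of_nonneg {f g f' g' : ℝ → ℝ}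
    (hf : ∀ x, HasDerivAt f (f' x) x) (hg : ∀ x, HasDerivAt g (g' x) x)
    (h₀ : f 0 ≤ g 0) (h' : ∀ x, 0 ≤ x → f' x ≤ g' x) {x : ℝ} (hx : 0 ≤ x) :
    f x ≤ g x := by
  have hmono : MonotoneOn (fun t => g t - f t) (Set.Ici 0) := by
    refine monotoneOn_of_hasDerivWithinAt_nonneg (convex_Ici 0)
      (fun t _ => ((hg t).sub (hf t)).continuousAt.continuousWithinAt)
      (fun t _ => ((hg t).sub (hf t)).hasDerivWithinAt) fun t ht => ?_
    rw [interior_Ici] at ht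
    exact sub_nonneg.2 (h' t ht.le)
  have := hmono Set.self_mem_Ici (Set.mem_Ici.2 hx) hx
  dsimp only at this
  linarith

theorem cos_le_taylor_four {x : ℝ} (hx : 0 ≤ x) :
    cos x ≤ 1 - x ^ 2 / 2 + x ^ 4 / 24 := by
  refine le_of_hasDerivAt_le_of_nonneg (g := fun t => 1 - t ^ 2 / 2 + t ^ 4 / 24)
    (g' := fun t => -(t - t ^ 3 / 6)) hasDerivAt_cos (fun t => ?_) ?_
    (fun t ht => neg_le_neg (sin_ge_sub_cube ht)) hx
  · exact (((hasDerivAt_const t (1 : ℝ)).sub ((hasDerivAt_pow 2 t).div_const 2)).add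
      ((hasDerivAt_pow 4 t).div_const 24)).congr_deriv (by push_cast; ring)
  · norm_num

theorem sin_le_taylor_five {x : ℝ} (hx : 0 ≤ x) :
    sin x ≤ x - x ^ 3 / 6 + x ^ 5 / 120 := by
  refine le_of_hasDerivAt_le_of_nonneg (g := fun t => t - t ^ 3 / 6 + t ^ 5 / 120)
    hasDerivAt_sin (fun t => ?_) ?_ (fun t ht => cos_le_taylor_four ht) hx
  · exact (((hasDerivAt_id t).sub ((hasDerivAt_pow 3 t).div_const 6)).add
      ((hasDerivAt_pow 5 t).div_const 120)).congr_deriv (by push_cast; ring)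
  · norm_num

theorem taylor_six_le_cos {x : ℝ} (hx : 0 ≤ x) :
    1 - x ^ 2 / 2 + x ^ 4 / 24 - x ^ 6 / 720 ≤ cos x := by
  refine le_of_hasDerivAt_le_of_nonneg (f := fun t => 1 - t ^ 2 / 2 + t ^ 4 / 24 - t ^ 6 / 720)
    (f' := fun t => -(t - t ^ 3 / 6 + t ^ 5 / 120)) (fun t => ?_) hasDerivAt_cos ?_
    (fun t ht => neg_le_neg (sin_le_taylor_five ht)) hx
  · exact ((((hasDerivAt_const t (1 : ℝ)).sub ((hasDerivAt_pow 2 t).div_const 2)).add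
      ((hasDerivAt_pow 4 t).div_const 24)).sub ((hasDerivAt_pow 6 t).div_const 720)).congr_deriv
      (by push_cast; ring)
  · norm_num

theorem taylor_seven_le_sin {x : ℝ} (hx : 0 ≤ x) :
    x - x ^ 3 / 6 + x ^ 5 / 120 - x ^ 7 / 5040 ≤ sin x := by
  refine le_of_hasDerivAt_le_of_nonneg (f := fun t => t - t ^ 3 / 6 + t ^ 5 / 120 - t ^ 7 / 5040)
    (fun t => ?_) hasDerivAt_sin ?_ (fun t ht => taylor_six_le_cos ht) hx
  · exact ((((hasDerivAt_id t).sub ((hasDerivAt_pow 3 t).div_const 6)).add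
      ((hasDerivAt_pow 5 t).div_const 120)).sub ((hasDerivAt_pow 7 t).div_const 5040)).congr_deriv
      (by push_cast; ring)
  · norm_num

theorem pi_sq_sub_sq_mul_le_sin_mul_of_le_pi_div_two {x : ℝ} (hx₀ : 0 ≤ x) (hx : x ≤ π / 2) :
    (π ^ 2 - x ^ 2) * x ≤ sin x * (π ^ 2 + x ^ 2) := by
  set u := x ^ 2
  have hu₀ : 0 ≤ u := sq_nonneg x
  have hpoly : 0 ≤ (2 - π ^ 2 / 6) - (1 / 6 - π ^ 2 / 120) * u
      + (1 / 120 - π ^ 2 / 5040) * u ^ 2 - u ^ 3 / 5040 := by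
    have hπ₁ : 9.85 < π ^ 2 := by nlinarith [pi_gt_d2]
    have hπ₂ : π ^ 2 < 9.93 := by nlinarith [pi_gt_d2, pi_lt_d2]
    have hu₁ : u ≤ 2.49 := by nlinarith [pi_pos]
    have h₁ : (1 / 6 - π ^ 2 / 120) * u ≤ 0.0846 * 2.49 := by
      nlinarith [mul_nonneg (sub_nonneg.2 hπ₁.le) hu₀]
    have h₂ : 0 ≤ (1 / 120 - π ^ 2 / 5040) * u ^ 2 := mul_nonneg (by linarith) (sq_nonneg u)
    have h₃ : u ^ 3 ≤ 2.49 ^ 3 := pow_le_pow_left₀ hu₀ hu₁ 3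
    linarith
  calc (π ^ 2 - x ^ 2) * x
      ≤ (x - x ^ 3 / 6 + x ^ 5 / 120 - x ^ 7 / 5040) * (π ^ 2 + x ^ 2) := by
        nlinarith [mul_nonneg (pow_nonneg hx₀ 3) hpoly]
    _ ≤ sin x * (π ^ 2 + x ^ 2) := by gcongr; exact taylor_seven_le_sin hx₀

theorem pi_sq_sub_sq_mul_le_sin_mul_of_pi_div_two_le {x : ℝ} (hx : π / 2 ≤ x) (hxπ : x ≤ π) :
    (π ^ 2 - x ^ 2) * x ≤ sin x * (π ^ 2 + x ^ 2) := by
  obtain ⟨y, rfl⟩ : ∃ y, x = π - y := ⟨π - x, (sub_sub_cancel π x).symm⟩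
  have hy₀ : 0 ≤ y := by linarith
  have hy : y ≤ π / 2 := by linarith
  have hpoly : 0 ≤ π - π ^ 2 / 3 * y + π / 3 * y ^ 2 - (1 / 6 - π ^ 2 / 60) * y ^ 3
      - π / 60 * y ^ 4 + (1 / 120 - π ^ 2 / 2520) * y ^ 5 + π / 2520 * y ^ 6 - y ^ 7 / 5040 := by
    have hπ₁ := pi_gt_d2
    have hπ₂ := pi_lt_d2
    have hy₁ : y ≤ 1.575 := by linarith
    have h₃ : y ^ 3 ≤ 1.575 ^ 3 := pow_le_pow_left₀ hy₀ hy₁ 3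
    have h₄ : y ^ 4 ≤ 1.575 ^ 4 := pow_le_pow_left₀ hy₀ hy₁ 4
    have h₇ : y ^ 7 ≤ 1.575 ^ 7 := pow_le_pow_left₀ hy₀ hy₁ 7
    have hquad : π * (3 - π ^ 2 / 4) / 3 ≤ π - π ^ 2 / 3 * y + π / 3 * y ^ 2 := by
      nlinarith [mul_nonneg pi_pos.le (sq_nonneg (y - π / 2))]
    have h₅ : 0 ≤ (1 / 120 - π ^ 2 / 2520) * y ^ 5 := mul_nonneg (by nlinarith) (by positivity)
    have h₆ : 0 ≤ π / 2520 * y ^ 6 := by positivity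
    nlinarith [mul_le_mul_of_nonneg_left h₄ pi_pos.le,
      mul_le_mul_of_nonneg_left h₃ (by nlinarith : (0 : ℝ) ≤ 1 / 6 - π ^ 2 / 60)]
  rw [sin_pi_sub]
  calc (π ^ 2 - (π - y) ^ 2) * (π - y)
      ≤ (y - y ^ 3 / 6 + y ^ 5 / 120 - y ^ 7 / 5040) * (π ^ 2 + (π - y) ^ 2) := by
        nlinarith [mul_nonneg (sq_nonneg y) hpoly]
    _ ≤ sin y * (π ^ 2 + (π - y) ^ 2) := by gcongr; exact taylor_seven_le_sin hy₀

theorem redheffer {x : ℝ} (hx : 0 < x) (hxπ : x ≤ π) :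
    (π ^ 2 - x ^ 2) / (π ^ 2 + x ^ 2) ≤ sin x / x := by
  rw [div_le_div_iff₀ (by positivity) hx]
  rcases le_total x (π / 2) with h | h
  · exact pi_sq_sub_sq_mul_le_sin_mul_of_le_pi_div_two hx.le h
  · exact pi_sq_sub_sq_mul_le_sin_mul_of_pi_div_two_le h hxπ

theorem zhu_sun_lower (β : ℝ) (hβ : 1 ≤ β) (x : ℝ) (hx : 0 < x) (hxpi : x < π) :
    ((π ^ 2 - x ^ 2) / (π ^ 2 + x ^ 2)) ^ β ≤ Real.sin x / x := by
  have hbase₀ : 0 ≤ (π ^ 2 - x ^ 2) / (π ^ 2 + x ^ 2) :=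
    div_nonneg (by nlinarith) (by positivity)
  have hbase₁ : (π ^ 2 - x ^ 2) / (π ^ 2 + x ^ 2) ≤ 1 :=
    (div_le_one (by positivity)).2 (by nlinarith)
  exact (rpow_le_self_of_le_one hbase₀ hbase₁ hβ).trans (redheffer hx hxpi.le)
end

section
/- Define λ(p) := (p−1)·(π/(p·sin(π/p)))^p for p > 1. Then λ is strictly increasing on (1, ∞). -/
/-!
With `θ = π / p`, the derivative of `log λ(p)` is
`F(θ) = θ / (π - θ) - log (sin θ / θ) + θ cot θ - 1`, which tends to `0` as `θ → 0⁺` and satisfies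
`F'(θ) = π / (π - θ)² + 1 / θ - θ / sin² θ > 0` on `(0, π)`; hence `F > 0` there.
Clearing denominators, `F' > 0` becomes `θ² (π - θ)² < sin² θ (π² - πθ + θ²)`, which is invariant
under `θ ↦ π - θ` and on `(0, π / 2]` follows from `sin θ > θ - θ³ / 6`.
-/

open Real Set Filter Topology

lemma sinc_pos_of_abs_lt_pi {x : ℝ} (hx : |x| < π) : 0 < sinc x := by
  rcases eq_or_ne x 0 with rfl | hx0
  · simp [sinc_zero]
  have hsinc : sinc x = sinc |x| := by
    rcases abs_choice x with h | h <;> simp [h, sinc_neg]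
  rw [hsinc, sinc_of_ne_zero (abs_ne_zero.2 hx0)]
  exact div_pos (sin_pos_of_pos_of_lt_pi (abs_pos.2 hx0) hx) (abs_pos.2 hx0)

lemma sq_mul_pi_sub_sq_lt_sin_sq_mul_of_le_pi_div_two {x : ℝ} (hx : 0 < x) (hxπ : x ≤ π / 2) :
    x ^ 2 * (π - x) ^ 2 < sin x ^ 2 * (π ^ 2 - π * x + x ^ 2) := by
  have hπl : 3.1415 < π := pi_gt_d4
  have hπu : π < 3.1416 := by linarith [pi_lt_d4]
  have hx' : x ≤ 1.5708 := by linarith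
  -- tight at `x = π / 2`, hence the four-digit bounds on `π`
  have hpoly : x * (12 - x ^ 2) * (π ^ 2 - π * x + x ^ 2) ≤ 36 * π := by
    have hq : π ^ 2 - π * x + x ^ 2 ≤ 9.8697 - 3.1415 * x + x ^ 2 := by nlinarith
    have hu := sub_nonneg.2 hx'
    calc x * (12 - x ^ 2) * (π ^ 2 - π * x + x ^ 2)
        ≤ x * (12 - x ^ 2) * (9.8697 - 3.1415 * x + x ^ 2) := by
          gcongr
          nlinarith
      _ ≤ 36 * 3.1415 := by
          nlinarith [mul_nonneg hx.le hu, mul_nonneg (mul_nonneg hx.le hx.le) hu]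
      _ ≤ 36 * π := by linarith
  have htaylor : 0 < x - x ^ 3 / 6 := by nlinarith
  have hsin : (x - x ^ 3 / 6) ^ 2 < sin x ^ 2 :=
    pow_lt_pow_left₀ (sin_gt_sub_cube hx) htaylor.le two_ne_zero
  have hq : 0 < π ^ 2 - π * x + x ^ 2 := by nlinarith
  -- the difference of the first two terms is `x³ (36π - x (12 - x²) (π² - πx + x²)) / 36`
  calc x ^ 2 * (π - x) ^ 2 ≤ (x - x ^ 3 / 6) ^ 2 * (π ^ 2 - π * x + x ^ 2) := by
        nlinarith [mul_nonneg (pow_nonneg hx.le 3) (sub_nonneg.2 hpoly)]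
    _ < sin x ^ 2 * (π ^ 2 - π * x + x ^ 2) := by gcongr

lemma sq_mul_pi_sub_sq_lt_sin_sq_mul {x : ℝ} (hx : 0 < x) (hxπ : x < π) :
    x ^ 2 * (π - x) ^ 2 < sin x ^ 2 * (π ^ 2 - π * x + x ^ 2) := by
  rcases le_or_gt x (π / 2) with h | h
  · exact sq_mul_pi_sub_sq_lt_sin_sq_mul_of_le_pi_div_two hx h
  · have := sq_mul_pi_sub_sq_lt_sin_sq_mul_of_le_pi_div_two (x := π - x) (by linarith) (by linarith)
    rw [sin_pi_sub] at this
    linarith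

/-- The function `F` above, written with `sinc` so that it is continuous at `0`. -/
noncomputable def lambdaLogDeriv (θ : ℝ) : ℝ :=
  θ / (π - θ) - log (sinc θ) + cos θ / sinc θ - 1

lemma lambdaLogDeriv_eq {θ : ℝ} (hθ : 0 < θ) (hθπ : θ < π) :
    lambdaLogDeriv θ = θ / (π - θ) + (log θ - log (sin θ)) + θ * cos θ / sin θ - 1 := by
  have hsin := sin_pos_of_pos_of_lt_pi hθ hθπ
  rw [lambdaLogDeriv, sinc_of_ne_zero hθ.ne', log_div hsin.ne' hθ.ne', div_div_eq_mul_div]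
  ring

lemma hasDerivAt_lambdaLogDeriv {θ : ℝ} (hθ : 0 < θ) (hθπ : θ < π) :
    HasDerivAt lambdaLogDeriv (π / (π - θ) ^ 2 + 1 / θ - θ / sin θ ^ 2) θ := by
  have hsin := sin_pos_of_pos_of_lt_pi hθ hθπ
  have hπθ : π - θ ≠ 0 := sub_ne_zero_of_ne hθπ.ne'
  refine ((((hasDerivAt_id θ).div ((hasDerivAt_const θ π).sub (hasDerivAt_id θ)) hπθ).add
      ((hasDerivAt_log hθ.ne').sub ((hasDerivAt_sin θ).log hsin.ne'))).add
      (((hasDerivAt_id θ).mul (hasDerivAt_cos θ)).div (hasDerivAt_sin θ) hsin.ne')).sub_const 1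
    |>.congr_of_eventuallyEq ?_ |>.congr_deriv ?_
  · filter_upwards [Ioo_mem_nhds hθ hθπ] with t ht using lambdaLogDeriv_eq ht.1 ht.2
  simp only [Pi.sub_apply, Pi.mul_apply, id_eq]
  rw [show θ * cos θ * cos θ = θ * (1 - sin θ ^ 2) by linear_combination θ * sin_sq_add_cos_sq θ]
  field_simp
  ring

lemma continuousOn_lambdaLogDeriv : ContinuousOn lambdaLogDeriv (Ico 0 π) := by
  intro θ hθ
  have hs : sinc θ ≠ 0 := (sinc_pos_of_abs_lt_pi (by rw [abs_of_nonneg hθ.1]; exact hθ.2)).ne'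
  have hπθ : π - θ ≠ 0 := sub_ne_zero_of_ne hθ.2.ne'
  exact (((continuousAt_id.div (continuousAt_const.sub continuousAt_id) hπθ).sub
    (continuous_sinc.continuousAt.log hs)).add
    (continuous_cos.continuousAt.div continuous_sinc.continuousAt hs)).sub
    continuousAt_const |>.continuousWithinAt

lemma strictMonoOn_lambdaLogDeriv : StrictMonoOn lambdaLogDeriv (Ico 0 π) := by
  refine strictMonoOn_of_deriv_pos (convex_Ico 0 π) continuousOn_lambdaLogDeriv fun θ hθ => ?_
  rw [interior_Ico] at hθ
  obtain ⟨hθ0, hθπ⟩ := hθ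
  have hsin := sin_pos_of_pos_of_lt_pi hθ0 hθπ
  have hπθ : 0 < π - θ := sub_pos.2 hθπ
  rw [(hasDerivAt_lambdaLogDeriv hθ0 hθπ).deriv]
  have key := sq_mul_pi_sub_sq_lt_sin_sq_mul hθ0 hθπ
  have h : π / (π - θ) ^ 2 + 1 / θ - θ / sin θ ^ 2 =
      (sin θ ^ 2 * (π ^ 2 - π * θ + θ ^ 2) - θ ^ 2 * (π - θ) ^ 2) /
        ((π - θ) ^ 2 * θ * sin θ ^ 2) := by
    field_simp
    ring
  rw [h]
  exact div_pos (sub_pos.2 key) (by positivity)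

lemma lambdaLogDeriv_pos {θ : ℝ} (hθ : 0 < θ) (hθπ : θ < π) : 0 < lambdaLogDeriv θ := by
  have h0 : lambdaLogDeriv 0 = 0 := by simp [lambdaLogDeriv, sinc_zero]
  rw [← h0]
  exact strictMonoOn_lambdaLogDeriv ⟨le_rfl, pi_pos⟩ ⟨hθ.le, hθπ⟩ hθ

lemma pi_div_mem_Ioo {p : ℝ} (hp : 1 < p) : π / p ∈ Ioo 0 π :=
  ⟨div_pos pi_pos (by linarith), div_lt_self pi_pos hp⟩

noncomputable def logLambda (p : ℝ) : ℝ :=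
  log (p - 1) + p * (log π - log p - log (sin (π / p)))

lemma exp_logLambda {p : ℝ} (hp : 1 < p) :
    exp (logLambda p) = (p - 1) * (π / (p * sin (π / p))) ^ p := by
  have hp0 : 0 < p := by linarith
  have hsin := sin_pos_of_pos_of_lt_pi (pi_div_mem_Ioo hp).1 (pi_div_mem_Ioo hp).2
  rw [rpow_def_of_pos (by positivity), log_div pi_pos.ne' (by positivity), log_mul hp0.ne' hsin.ne',
    logLambda, exp_add, exp_log (sub_pos.2 hp)]
  congr 2
  ring

lemma hasDerivAt_logLambda {p : ℝ} (hp : 1 < p) :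
    HasDerivAt logLambda (lambdaLogDeriv (π / p)) p := by
  have hp0 : p ≠ 0 := by positivity
  obtain ⟨hθ, hθπ⟩ := pi_div_mem_Ioo hp
  have hsin := sin_pos_of_pos_of_lt_pi hθ hθπ
  have hθ' : HasDerivAt (fun t => π / t) (-π / p ^ 2) p := by
    simpa [div_eq_mul_inv, neg_div] using (hasDerivAt_inv hp0).const_mul π
  have h := ((hasDerivAt_log (sub_pos.2 hp).ne').comp p ((hasDerivAt_id p).sub_const 1)).add
    ((hasDerivAt_id p).mul (((hasDerivAt_const p (log π)).sub (hasDerivAt_log hp0)).sub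
      (((hasDerivAt_sin _).comp p hθ').log hsin.ne')))
  refine h.congr_deriv ?_
  simp only [Pi.sub_apply, Function.comp_apply, id_eq]
  rw [lambdaLogDeriv_eq hθ hθπ, log_div pi_pos.ne' hp0]
  field_simp
  ring

lemma strictMonoOn_logLambda : StrictMonoOn logLambda (Ioi 1) := by
  refine strictMonoOn_of_deriv_pos (convex_Ioi 1)
    (fun p hp => (hasDerivAt_logLambda hp).continuousAt.continuousWithinAt) fun p hp => ?_
  rw [interior_Ioi] at hp
  rw [(hasDerivAt_logLambda hp).deriv]
  exact lambdaLogDeriv_pos (pi_div_mem_Ioo hp).1 (pi_div_mem_Ioo hp).2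

theorem lambda_strictMonoOn :
    StrictMonoOn (fun p : ℝ => (p - 1) * (π / (p * Real.sin (π / p))) ^ p)
      (Set.Ioi (1 : ℝ)) :=
  (exp_strictMono.comp_strictMonoOn strictMonoOn_logLambda).congr fun _ => exp_logLambda
end

section
/- Define λ(p) := (p−1)·(π/(p·sin(π/p)))^p for p > 1. Then for every p > 1, λ(p) > p + π²/6 − 1 − π²/(6(p+1)). -/
/-!
At `x = π / p` the Zhu–Sun refinement of Redheffer's inequality,
`sin x / x ≤ (π² - x²) / (π² + (π² / 6 - 1) x²)` on `[0, π]`, says that the base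
`π / (p sin (π / p))` is at least `1 + a` with `a = π² / (6 (p² - 1))`. Bernoulli's inequality
`(1 + a) ^ p > 1 + p a` then gives `λ(p) > (p - 1)(1 + p a)`, which is the claimed bound.
The Zhu–Sun inequality follows from the degree-nine Taylor bound for `sin` on `[0, 5/2]`
and from `sin x ≤ π - x` on `[5/2, π]`.
-/

open Real Finset
open scoped Nat

lemma nonneg_of_hasDerivAt_nonneg {f f' : ℝ → ℝ} (hf : ∀ y, HasDerivAt f (f' y) y)
    (hf0 : f 0 = 0) (hf' : ∀ y, 0 ≤ y → 0 ≤ f' y) {x : ℝ} (hx : 0 ≤ x) : 0 ≤ f x := by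
  have hmono : MonotoneOn f (Set.Ici 0) :=
    monotoneOn_of_hasDerivWithinAt_nonneg (convex_Ici 0)
      (fun y _ => (hf y).continuousAt.continuousWithinAt)
      (fun y _ => (hf y).hasDerivWithinAt) (fun y hy => hf' y (interior_subset hy))
  simpa [hf0] using hmono Set.self_mem_Ici hx hx

noncomputable def sinTaylor (n : ℕ) (x : ℝ) : ℝ :=
  ∑ k ∈ range n, (-1) ^ k * (x ^ (2 * k + 1) / (2 * k + 1)!)

noncomputable def cosTaylor (n : ℕ) (x : ℝ) : ℝ :=
  ∑ k ∈ range n, (-1) ^ k * (x ^ (2 * k) / (2 * k)!)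

lemma hasDerivAt_pow_succ_div_factorial (m : ℕ) (x : ℝ) :
    HasDerivAt (fun y : ℝ => y ^ (m + 1) / ((m + 1)! : ℝ)) (x ^ m / (m ! : ℝ)) x := by
  refine ((hasDerivAt_pow (m + 1) x).div_const _).congr_deriv ?_
  rw [Nat.factorial_succ, add_tsub_cancel_right]
  push_cast
  field_simp

lemma hasDerivAt_sinTaylor (n : ℕ) (x : ℝ) : HasDerivAt (sinTaylor n) (cosTaylor n x) x := by
  unfold sinTaylor cosTaylor
  exact HasDerivAt.fun_sum fun k _ => (hasDerivAt_pow_succ_div_factorial (2 * k) x).const_mul _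

lemma hasDerivAt_cosTaylor_succ (n : ℕ) (x : ℝ) :
    HasDerivAt (cosTaylor (n + 1)) (-sinTaylor n x) x := by
  have hcos : cosTaylor (n + 1) =
      fun y : ℝ => ∑ k ∈ range n,
        (-1 : ℝ) ^ (k + 1) * (y ^ (2 * k + 1 + 1) / ((2 * k + 1 + 1)! : ℝ)) + 1 := by
    funext y
    simp [cosTaylor, sum_range_succ', mul_add]
  rw [hcos, sinTaylor, ← sum_neg_distrib]
  refine (HasDerivAt.fun_sum fun k _ => ?_).add_const 1
  refine ((hasDerivAt_pow_succ_div_factorial (2 * k + 1) x).const_mul _).congr_deriv ?_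
  ring

lemma sin_alternating_of_cos {n : ℕ}
    (hcos : ∀ y, 0 ≤ y → 0 ≤ (-1) ^ n * (cos y - cosTaylor n y)) {x : ℝ}
    (hx : 0 ≤ x) : 0 ≤ (-1) ^ n * (sin x - sinTaylor n x) :=
  nonneg_of_hasDerivAt_nonneg
    (fun y => ((hasDerivAt_sin y).sub (hasDerivAt_sinTaylor n y)).const_mul _)
    (by simp [sinTaylor]) hcos hx

lemma cos_alternating_of_sin {n : ℕ}
    (hsin : ∀ y, 0 ≤ y → 0 ≤ (-1) ^ n * (sin y - sinTaylor n y)) {x : ℝ}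
    (hx : 0 ≤ x) : 0 ≤ (-1) ^ (n + 1) * (cos x - cosTaylor (n + 1) x) := by
  refine nonneg_of_hasDerivAt_nonneg
    (fun y => ((hasDerivAt_cos y).sub (hasDerivAt_cosTaylor_succ n y)).const_mul _)
    (by simp [cosTaylor, sum_range_succ']) (fun y hy => ?_) hx
  convert hsin y hy using 1
  ring

lemma cos_alternating (n : ℕ) {x : ℝ} (hx : 0 ≤ x) :
    0 ≤ (-1) ^ (n + 1) * (cos x - cosTaylor (n + 1) x) := by
  induction n generalizing x with
  | zero => simpa [cosTaylor] using cos_le_one x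
  | succ n ih =>
    exact cos_alternating_of_sin (fun _ hy => sin_alternating_of_cos (fun _ hz => ih hz) hy) hx

lemma sin_alternating (n : ℕ) {x : ℝ} (hx : 0 ≤ x) :
    0 ≤ (-1) ^ (n + 1) * (sin x - sinTaylor (n + 1) x) :=
  sin_alternating_of_cos (fun _ hy => cos_alternating n hy) hx

lemma sin_le_ninth_taylor {x : ℝ} (hx : 0 ≤ x) :
    sin x ≤ x - x ^ 3 / 6 + x ^ 5 / 120 - x ^ 7 / 5040 + x ^ 9 / 362880 := by
  have hT : sinTaylor 5 x = x - x ^ 3 / 6 + x ^ 5 / 120 - x ^ 7 / 5040 + x ^ 9 / 362880 := by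
    norm_num [sinTaylor, sum_range_succ, Nat.factorial]
    ring
  have h := sin_alternating 4 hx
  rw [hT, show (-1 : ℝ) ^ (4 + 1) = -1 by norm_num] at h
  linarith

-- `x (π² - x²) - (π² + (π² / 6 - 1) x²) T₉(x) = x⁵ g(x²)`, where `T₉` is the Taylor
-- polynomial of `sin` of degree nine and `g` is this cubic at `t = π²`.
lemma zhuSun_cubic_nonneg {y t : ℝ} (hy0 : 0 ≤ y) (hy : y ≤ 25 / 4) (ht1 : 9.86 ≤ t)
    (ht2 : t ≤ 9.88) :
    0 ≤ (7 * t / 360 - 1 / 6) + (1 / 120 - t / 840) * y + (11 * t / 362880 - 1 / 5040) * y ^ 2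
        + ((6 - t) / 2177280) * y ^ 3 := by
  nlinarith [mul_nonneg hy0 hy0, mul_nonneg (mul_nonneg hy0 hy0) hy0,
    mul_nonneg (sub_nonneg.2 hy) hy0, mul_nonneg (mul_nonneg (sub_nonneg.2 hy) hy0) hy0,
    mul_nonneg (sub_nonneg.2 ht1) hy0, mul_nonneg (sub_nonneg.2 ht2) hy0]

lemma pi_sq_bounds : 9.86 ≤ π ^ 2 ∧ π ^ 2 ≤ 9.88 := by
  constructor <;> nlinarith [pi_gt_d4, pi_lt_d4]

lemma zhuSun_mul_sin_le {x : ℝ} (hx0 : 0 ≤ x) (hxπ : x ≤ π) :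
    (π ^ 2 + (π ^ 2 / 6 - 1) * x ^ 2) * sin x ≤ x * (π ^ 2 - x ^ 2) := by
  have hc : 0 < π ^ 2 / 6 - 1 := by nlinarith [pi_gt_d2]
  have hcoef : 0 ≤ π ^ 2 + (π ^ 2 / 6 - 1) * x ^ 2 := by positivity
  rcases le_or_gt x (5 / 2) with hsmall | hlarge
  · have hcubic := zhuSun_cubic_nonneg (sq_nonneg x) (by nlinarith) pi_sq_bounds.1 pi_sq_bounds.2
    calc (π ^ 2 + (π ^ 2 / 6 - 1) * x ^ 2) * sin x
        ≤ (π ^ 2 + (π ^ 2 / 6 - 1) * x ^ 2) *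
            (x - x ^ 3 / 6 + x ^ 5 / 120 - x ^ 7 / 5040 + x ^ 9 / 362880) :=
          mul_le_mul_of_nonneg_left (sin_le_ninth_taylor hx0) hcoef
      _ ≤ x * (π ^ 2 - x ^ 2) := by nlinarith [mul_nonneg (pow_nonneg hx0 5) hcubic]
  · have hsin : sin x ≤ π - x := by simpa [sin_pi_sub] using sin_le (sub_nonneg.2 hxπ)
    have hquad : π ^ 2 + (π ^ 2 / 6 - 1) * x ^ 2 ≤ x * (π + x) := by
      nlinarith [pi_gt_d4, pi_lt_d4, pi_sq_bounds.2]
    calc (π ^ 2 + (π ^ 2 / 6 - 1) * x ^ 2) * sin x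
        ≤ (π ^ 2 + (π ^ 2 / 6 - 1) * x ^ 2) * (π - x) := mul_le_mul_of_nonneg_left hsin hcoef
      _ ≤ x * (π + x) * (π - x) := mul_le_mul_of_nonneg_right hquad (sub_nonneg.2 hxπ)
      _ = x * (π ^ 2 - x ^ 2) := by ring

lemma one_add_pi_sq_div_le_pi_div_mul_sin {p : ℝ} (hp : 1 < p) :
    1 + π ^ 2 / (6 * (p ^ 2 - 1)) ≤ π / (p * sin (π / p)) := by
  have hp0 : 0 < p := by linarith
  have hp2 : 0 < p ^ 2 - 1 := by nlinarith
  have hxπ : π / p < π := div_lt_self pi_pos hp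
  have hs : 0 < sin (π / p) := sin_pos_of_pos_of_lt_pi (by positivity) hxπ
  have key := zhuSun_mul_sin_le (by positivity) hxπ.le
  set c := π ^ 2 / 6 - 1
  have hbound : (p ^ 2 + c) * (p * sin (π / p)) ≤ π * (p ^ 2 - 1) :=
    calc (p ^ 2 + c) * (p * sin (π / p))
        = p ^ 3 / π ^ 2 * ((π ^ 2 + c * (π / p) ^ 2) * sin (π / p)) := by
          field_simp
      _ ≤ p ^ 3 / π ^ 2 * (π / p * (π ^ 2 - (π / p) ^ 2)) := by gcongr
      _ = π * (p ^ 2 - 1) := by field_simp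
  have hleft : 1 + π ^ 2 / (6 * (p ^ 2 - 1)) = (p ^ 2 + c) / (p ^ 2 - 1) := by
    field_simp
    ring
  rw [hleft, div_le_div_iff₀ hp2 (by positivity)]
  linarith

theorem lambda_lower_bound (p : ℝ) (hp : 1 < p) :
    p + π ^ 2 / 6 - 1 - π ^ 2 / (6 * (p + 1)) <
      (p - 1) * (π / (p * Real.sin (π / p))) ^ p := by
  have hp2 : 0 < p ^ 2 - 1 := by nlinarith
  set a := π ^ 2 / (6 * (p ^ 2 - 1))
  have ha : 0 < a := by positivity
  calc p + π ^ 2 / 6 - 1 - π ^ 2 / (6 * (p + 1))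
      = (p - 1) * (1 + p * a) := by
        have : p + 1 ≠ 0 := by linarith
        simp only [a]
        field_simp
        ring
    _ < (p - 1) * (1 + a) ^ p :=
        mul_lt_mul_of_pos_left (one_add_mul_self_lt_rpow_one_add (by linarith) ha.ne' hp)
          (by linarith)
    _ ≤ (p - 1) * (π / (p * sin (π / p))) ^ p := by
        gcongr
        exact one_add_pi_sq_div_le_pi_div_mul_sin hp
end

section
/- Define λ(p) := (p−1)·(π/(p·sin(π/p)))^p for p > 1. Then λ(p) − p → π²/6 − 1 as p → ∞. -/
/-!
Put `x = π / p`. Then `π / (p sin (π / p)) = (sinc x)⁻¹`, so with `L p = -log (sinc (π / p))`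
we have `λ(p) - p = (p - 1) (exp (p L p) - 1) - 1`. From `sin x = x - x³/6 + O(x⁵)` we get
`L p ~ π² / (6 p²)`, hence `p L p → 0`, `exp (p L p) - 1 ~ p L p ~ π² / (6 p)`, and
`(p - 1) (exp (p L p) - 1) → π² / 6`.
-/

open Real Filter Topology Asymptotics

namespace Real

theorem isEquivalent_exp_sub_one : (fun t => exp t - 1) ~[𝓝 0] id := by
  simpa using! (hasDerivAt_exp 0).isLittleO

theorem isEquivalent_log_sub_one : log ~[𝓝 1] fun y => y - 1 := by
  simpa using! (hasDerivAt_log one_ne_zero).isLittleO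

theorem isEquivalent_sinc_sub_one : (fun x => sinc x - 1) ~[𝓝 0] fun x => -(x ^ 2 / 6) := by
  have hbig : (fun x => sinc x - 1 - -(x ^ 2 / 6)) =O[𝓝 0] fun x : ℝ => x ^ 4 := by
    refine IsBigO.of_bound (1 / 100) ?_
    filter_upwards [Metric.closedBall_mem_nhds (0 : ℝ) one_pos] with x hx
    rw [mem_closedBall_zero_iff, norm_eq_abs] at hx
    rcases eq_or_ne x 0 with rfl | hx0
    · simp
    have hsinc : sinc x - 1 - -(x ^ 2 / 6) = (sin x - (x - x ^ 3 / 6)) / x := by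
      rw [sinc_of_ne_zero hx0]; field_simp; ring
    rw [hsinc, norm_div, norm_eq_abs, norm_eq_abs, norm_pow, norm_eq_abs,
      div_le_iff₀ (abs_pos.2 hx0)]
    calc |sin x - (x - x ^ 3 / 6)| ≤ |x| ^ 5 / 100 := sin_bound hx
      _ = 1 / 100 * |x| ^ 4 * |x| := by ring
  have hsmall : (fun x : ℝ => x ^ 4) =o[𝓝 0] fun x => -(x ^ 2 / 6) := by
    refine isLittleO_neg_right.2 ((isLittleO_pow_pow (by norm_num : 2 < 4)).trans_isBigO ?_)
    exact (isBigO_self_const_mul (by norm_num : (6 : ℝ)⁻¹ ≠ 0) _ _).congr_right fun x => by ring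
  exact hbig.trans_isLittleO hsmall

theorem isEquivalent_log_sinc : (fun x => log (sinc x)) ~[𝓝 0] fun x => -(x ^ 2 / 6) :=
  (isEquivalent_log_sub_one.comp_tendsto (continuous_sinc.tendsto' 0 1 sinc_zero)).trans
    isEquivalent_sinc_sub_one

theorem pi_div_mul_sin_pi_div_rpow {p : ℝ} (hp : 1 < p) :
    (π / (p * sin (π / p))) ^ p = exp (p * -log (sinc (π / p))) := by
  have hπp : 0 < π / p := div_pos pi_pos (by linarith)
  have hsin : 0 < sin (π / p) := sin_pos_of_pos_of_lt_pi hπp (div_lt_self pi_pos hp)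
  have hsinc : π / (p * sin (π / p)) = (sinc (π / p))⁻¹ := by
    rw [sinc_of_ne_zero hπp.ne', inv_div, div_div]
  have hsinc_pos : 0 < sinc (π / p) := by
    rw [sinc_of_ne_zero hπp.ne']
    exact div_pos hsin hπp
  rw [hsinc, rpow_def_of_pos (inv_pos.2 hsinc_pos), log_inv, mul_comm]

end Real

theorem tendsto_sub_one_mul_exp_mul_sub_one {L : ℝ → ℝ} {c : ℝ}
    (hL : L ~[atTop] fun p => c / p ^ 2) :
    Tendsto (fun p => (p - 1) * (exp (p * L p) - 1)) atTop (𝓝 c) := by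
  have hpL : (fun p => p * L p) ~[atTop] fun p => c / p :=
    (IsEquivalent.refl.mul hL).congr_right <| by
      filter_upwards [eventually_ne_atTop 0] with p hp
      simp only [Pi.mul_apply]
      field_simp
  have hpL0 : Tendsto (fun p => p * L p) atTop (𝓝 0) :=
    hpL.symm.tendsto_nhds (tendsto_const_nhds.div_atTop tendsto_id)
  have hexp : (fun p => exp (p * L p) - 1) ~[atTop] fun p => c / p :=
    (isEquivalent_exp_sub_one.comp_tendsto hpL0).trans hpL
  have hsub : (fun p : ℝ => p - 1) ~[atTop] id :=
    IsEquivalent.refl.sub_isLittleO (isLittleO_const_id_atTop 1)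
  refine ((hsub.mul hexp).congr_right ?_).tendsto_const
  filter_upwards [eventually_ne_atTop 0] with p hp
  simp only [Pi.mul_apply, id, Function.const_apply]
  field_simp

theorem lambda_sub_p_tendsto :
    Tendsto (fun p : ℝ => (p - 1) * (π / (p * Real.sin (π / p))) ^ p - p)
      atTop (nhds (π ^ 2 / 6 - 1)) := by
  have hx : Tendsto (fun p : ℝ => π / p) atTop (𝓝 0) := tendsto_const_nhds.div_atTop tendsto_id
  have hL : (fun p : ℝ => -log (sinc (π / p))) ~[atTop] fun p => π ^ 2 / 6 / p ^ 2 :=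
    (isEquivalent_log_sinc.comp_tendsto hx).neg.congr_right
      (Eventually.of_forall fun p => by simp only [Function.comp_apply]; ring)
  refine ((tendsto_sub_one_mul_exp_mul_sub_one hL).sub_const 1).congr' ?_
  filter_upwards [eventually_gt_atTop 1] with p hp
  rw [pi_div_mul_sin_pi_div_rpow hp]
  ring
end

section
/- Let a > 0 and let S : [0,a] → ℝ be continuous on [0,a], C¹ on [0,a), and twice differentiable on [0,a) except possibly at finitely many points, with S(0) = S(a) = 0, 0 < S(x) < x for x ∈ (0,a), and S'(x)² − S''(x)·S(x) ≥ 1 wherever S'' exists on [0,a). Then for all x ∈ (0,a), (a² − x²)/(a² + x²) < S(x)/x. -/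
open Real

open Set Filter Topology

private lemma antitone_aux (Q : Finset ℝ) :
    ∀ (f : ℝ → ℝ) (α β : ℝ), α ≤ β → ContinuousOn f (Set.Icc α β) →
    (∀ t ∈ Set.Ioo α β, t ∉ Q → ∃ d, d ≤ 0 ∧ HasDerivAt f d t) → f β ≤ f α := by
  induction Q using Finset.induction_on with
  | empty =>
    intro f α β hab hcont hder
    have h1 : AntitoneOn f (Set.Icc α β) := by
      apply antitoneOn_of_deriv_nonpos (convex_Icc α β) hcont
      · intro t ht
        rw [interior_Icc] at ht
        obtain ⟨d, _, hd⟩ := hder t ht (Finset.notMem_empty t)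
        exact hd.differentiableAt.differentiableWithinAt
      · intro t ht
        rw [interior_Icc] at ht
        obtain ⟨d, hd0, hd⟩ := hder t ht (Finset.notMem_empty t)
        rw [hd.deriv]; exact hd0
    exact h1 (Set.left_mem_Icc.2 hab) (Set.right_mem_Icc.2 hab) hab
  | @insert q Q hqQ ih =>
    intro f α β hab hcont hder
    by_cases hmem : q ∈ Set.Ioo α β
    · have h1 : f β ≤ f q := by
        apply ih f q β hmem.2.le (hcont.mono (Set.Icc_subset_Icc hmem.1.le le_rfl))
        intro t ht htQ
        refine hder t ⟨hmem.1.trans ht.1, ht.2⟩ ?_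
        simp only [Finset.mem_insert, not_or]
        exact ⟨ne_of_gt ht.1, htQ⟩
      have h2 : f q ≤ f α := by
        apply ih f α q hmem.1.le (hcont.mono (Set.Icc_subset_Icc le_rfl hmem.2.le))
        intro t ht htQ
        refine hder t ⟨ht.1, ht.2.trans hmem.2⟩ ?_
        simp only [Finset.mem_insert, not_or]
        exact ⟨ne_of_lt ht.2, htQ⟩
      exact h1.trans h2
    · apply ih f α β hab hcont
      intro t ht htQ
      refine hder t ht ?_
      simp only [Finset.mem_insert, not_or]
      exact ⟨fun h => hmem (h ▸ ht), htQ⟩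

private lemma slope_tendsto {S : ℝ → ℝ}
    (hdiff : DifferentiableAt ℝ S 0) (hS0 : S 0 = 0) :
    Tendsto (fun x => S x / x) (𝓝[>] 0) (𝓝 (deriv S 0)) := by
  have h := hasDerivAt_iff_tendsto_slope.1 hdiff.hasDerivAt
  have h2 : Tendsto (slope S 0) (𝓝[>] (0:ℝ)) (𝓝 (deriv S 0)) :=
    h.mono_left (nhdsWithin_mono _ (fun x hx => by simpa using ne_of_gt hx))
  refine h2.congr (fun x => ?_)
  simp [slope_def_field, hS0]

private lemma deriv_zero_eq_one {a : ℝ} (ha : 0 < a) {S : ℝ → ℝ} {P : Finset ℝ}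
    (hdiff : ∀ x ∈ Set.Ico (0:ℝ) a, DifferentiableAt ℝ S x)
    (hderivcont : ContinuousOn (deriv S) (Set.Ico 0 a))
    (hdiff2 : ∀ x ∈ Set.Ico (0:ℝ) a, x ∉ P → DifferentiableAt ℝ (deriv S) x)
    (hS0 : S 0 = 0)
    (hpos : ∀ x ∈ Set.Ioo (0:ℝ) a, 0 < S x ∧ S x < x)
    (hkey : ∀ x ∈ Set.Ico (0:ℝ) a, x ∉ P →
      1 ≤ (deriv S x) ^ 2 - deriv (deriv S) x * S x) :
    deriv S 0 = 1 := by
  have h0mem : (0:ℝ) ∈ Set.Ico 0 a := ⟨le_refl _, ha⟩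
  have hsl := slope_tendsto (hdiff 0 h0mem) hS0
  have hIoo : Set.Ioo (0:ℝ) a ∈ 𝓝[>] (0:ℝ) := Ioo_mem_nhdsGT_of_mem ⟨le_refl _, ha⟩
  have hub : deriv S 0 ≤ 1 := by
    refine le_of_tendsto hsl ?_
    filter_upwards [hIoo] with x hx
    exact le_of_lt ((div_lt_one hx.1).2 (hpos x hx).2)
  have hlb : 0 ≤ deriv S 0 := by
    refine ge_of_tendsto hsl ?_
    filter_upwards [hIoo] with x hx
    exact le_of_lt (div_pos (hpos x hx).1 hx.1)
  by_contra hne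
  have hc1 : deriv S 0 < 1 := lt_of_le_of_ne hub hne
  set c := deriv S 0 with hc
  have hcsq : c^2 < (1 + c^2)/2 := by nlinarith
  have hcw : Tendsto (fun t => (deriv S t)^2) (𝓝[Set.Ico 0 a] 0) (𝓝 (c^2)) :=
    ((hderivcont 0 h0mem).pow 2)
  have hev : ∀ᶠ t in 𝓝[Set.Ico 0 a] (0:ℝ), (deriv S t)^2 < (1 + c^2)/2 :=
    hcw.eventually_lt_const hcsq
  obtain ⟨ε, hε, hball⟩ := Metric.mem_nhdsWithin_iff.1 hev
  set δ := min (ε/2) (a/2) with hδdef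
  have hδ0 : 0 < δ := lt_min (by linarith) (by linarith)
  have hδa : δ < a := lt_of_le_of_lt (min_le_right _ _) (by linarith)
  have hsq : ∀ t, 0 ≤ t → t ≤ δ → (deriv S t)^2 < (1 + c^2)/2 := by
    intro t ht0 htδ
    apply hball
    refine ⟨?_, ht0, lt_of_le_of_lt htδ hδa⟩
    rw [Metric.mem_ball, Real.dist_eq, sub_zero, abs_of_nonneg ht0]
    exact lt_of_le_of_lt htδ (lt_of_le_of_lt (min_le_left _ _) (by linarith))
  set η := (1 - c^2)/2 with hηdef
  have hη : 0 < η := by nlinarith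
  set f : ℝ → ℝ := fun t => deriv S t + η * Real.log t with hfdef
  have hmain : ∀ x, 0 < x → x < δ → f δ ≤ f x := by
    intro x hx0 hxδ
    apply antitone_aux P f x δ hxδ.le
    · apply ContinuousOn.add
      · exact hderivcont.mono (fun t ht => ⟨hx0.le.trans ht.1, lt_of_le_of_lt ht.2 hδa⟩)
      · apply ContinuousOn.mul continuousOn_const
        intro t ht
        exact (Real.continuousAt_log (ne_of_gt (lt_of_lt_of_le hx0 ht.1))).continuousWithinAt
    · intro t ht htP
      have ht0 : 0 < t := hx0.trans ht.1
      have hta : t < a := ht.2.trans hδa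
      have htIco : t ∈ Set.Ico (0:ℝ) a := ⟨ht0.le, hta⟩
      have hSt := hpos t ⟨ht0, hta⟩
      refine ⟨deriv (deriv S) t + η / t, ?_, ?_⟩
      · have hk := hkey t htIco htP
        have hq : deriv (deriv S) t * S t ≤ (deriv S t)^2 - 1 := by linarith
        have hp2 : (deriv S t)^2 < (1 + c^2)/2 := hsq t ht0.le ht.2.le
        have hqneg : deriv (deriv S) t * S t < -η := by rw [hηdef]; nlinarith
        have hq0 : deriv (deriv S) t < 0 := by nlinarith
        have hqt : deriv (deriv S) t * t < -η := by nlinarith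
        have h3 : deriv (deriv S) t < -η / t := (lt_div_iff₀ ht0).2 hqt
        rw [neg_div] at h3
        linarith
      · have hd : HasDerivAt f (deriv (deriv S) t + η * t⁻¹) t :=
          ((hdiff2 t htIco htP).hasDerivAt).add
            (((Real.hasDerivAt_log (ne_of_gt ht0))).const_mul η)
        rwa [← div_eq_mul_inv] at hd
  have hbnd : ∀ t, 0 < t → t ≤ δ → -1 ≤ deriv S t ∧ deriv S t ≤ 1 := by
    intro t ht0 htδ
    have := hsq t ht0.le htδ
    constructor <;> nlinarith
  set x := min (δ/2) (Real.exp (Real.log δ - 3/η)) with hxdef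
  have hx0 : 0 < x := lt_min (by linarith) (Real.exp_pos _)
  have hxδ : x < δ := lt_of_le_of_lt (min_le_left _ _) (by linarith)
  have hlogx : Real.log x ≤ Real.log δ - 3/η := by
    have h1 : Real.log x ≤ Real.log (Real.exp (Real.log δ - 3/η)) :=
      Real.log_le_log hx0 (min_le_right _ _)
    rwa [Real.log_exp] at h1
  have hfin := hmain x hx0 hxδ
  have h1 : -1 ≤ deriv S δ := (hbnd δ hδ0 le_rfl).1
  have h2 : deriv S x ≤ 1 := (hbnd x hx0 hxδ.le).2
  have h3 : η * (Real.log δ - Real.log x) ≤ 2 := by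
    simp only [hfdef] at hfin
    nlinarith
  have h4 : 3/η ≤ Real.log δ - Real.log x := by linarith
  have h5 : η * (3/η) = 3 := by field_simp
  nlinarith

private lemma psi_deriv {a : ℝ} {S : ℝ → ℝ} {P : Finset ℝ}
    (hdiff : ∀ x ∈ Set.Ico (0:ℝ) a, DifferentiableAt ℝ S x)
    (hdiff2 : ∀ x ∈ Set.Ico (0:ℝ) a, x ∉ P → DifferentiableAt ℝ (deriv S) x)
    (hpos : ∀ x ∈ Set.Ioo (0:ℝ) a, 0 < S x ∧ S x < x)
    (hkey : ∀ x ∈ Set.Ico (0:ℝ) a, x ∉ P →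
      1 ≤ (deriv S x) ^ 2 - deriv (deriv S) x * S x)
    {t : ℝ} (ht : t ∈ Set.Ioo (0:ℝ) a) (htP : t ∉ P)
    (hPsi : 0 ≤ (t^2*(1 + deriv S t) - S t*(t + S t))/(S t * t)) :
    ∃ d, d < 0 ∧
      HasDerivAt (fun u => (u^2*(1 + deriv S u) - S u*(u + S u))/(S u * u)) d t := by
  obtain ⟨ht0, hta⟩ := ht
  have htIco : t ∈ Set.Ico (0:ℝ) a := ⟨ht0.le, hta⟩
  have hS : HasDerivAt S (deriv S t) t := (hdiff t htIco).hasDerivAt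
  have hp : HasDerivAt (deriv S) (deriv (deriv S) t) t := (hdiff2 t htIco htP).hasDerivAt
  have hs := hpos t ⟨ht0, hta⟩
  set s := S t with hsdef
  set p := deriv S t with hpdef
  set q := deriv (deriv S) t with hqdef
  have hnum : HasDerivAt (fun u => u^2*(1 + deriv S u) - S u*(u + S u))
      (2*t*(1 + p) + t^2*q - (p*(t + s) + s*(1 + p))) t := by
    have h1 : HasDerivAt (fun u : ℝ => u^2) (2*t) t := by
      simpa using (hasDerivAt_pow 2 t)
    have h2 : HasDerivAt (fun u => 1 + deriv S u) q t := hp.const_add 1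
    have h3 : HasDerivAt (fun u => u + S u) (1 + p) t := (hasDerivAt_id t).add hS
    exact (h1.mul h2).sub (hS.mul h3)
  have hden : HasDerivAt (fun u => S u * u) (p*t + s*1) t := hS.mul (hasDerivAt_id t)
  have hst : 0 < s * t := mul_pos hs.1 ht0
  have hdiv := hnum.div hden (ne_of_gt hst)
  refine ⟨_, ?_, hdiv⟩
  set N := t^2*(1 + p) - s*(t + s) with hNdef
  have hN : 0 ≤ N := by
    by_contra hneg
    push_neg at hneg
    have : N / (s*t) < 0 := div_neg_of_neg_of_pos hneg hst
    rw [hNdef] at this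
    linarith [hPsi]
  have hA : 0 ≤ p^2 - 1 - q*s := by
    have := hkey t htIco htP
    linarith
  set T := (2*t*(1 + p) + t^2*q - (p*(t + s) + s*(1 + p)))*(s*t) - N*(p*t + s*1) with hTdef
  have hid : t*T = -(t^4*(p^2 - 1 - q*s) + N*(t^2 + s^2 - s*t) + s*(t-s)^2*(t+s)) := by
    rw [hTdef, hNdef]; ring
  have hterm2 : 0 ≤ t^2 + s^2 - s*t := by nlinarith [sq_nonneg (t - s)]
  have hterm3 : 0 < s*(t-s)^2*(t+s) := by
    have h1 : 0 < (t - s)^2 := pow_pos (sub_pos.2 hs.2) 2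
    have h2 : 0 < t + s := by linarith
    exact mul_pos (mul_pos hs.1 h1) h2
  have hT : T < 0 := by
    have h5 : t*T < 0 := by nlinarith [mul_nonneg (pow_nonneg ht0.le 4) hA, mul_nonneg hN hterm2]
    by_contra hge
    push_neg at hge
    nlinarith
  apply div_neg_of_neg_of_pos
  · exact hT
  · exact pow_pos hst 2

private lemma psi_tendsto {a : ℝ} (ha : 0 < a) {S : ℝ → ℝ} {P : Finset ℝ}
    (hdiff : ∀ x ∈ Set.Ico (0:ℝ) a, DifferentiableAt ℝ S x)
    (hderivcont : ContinuousOn (deriv S) (Set.Ico 0 a))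
    (hdiff2 : ∀ x ∈ Set.Ico (0:ℝ) a, x ∉ P → DifferentiableAt ℝ (deriv S) x)
    (hS0 : S 0 = 0)
    (hpos : ∀ x ∈ Set.Ioo (0:ℝ) a, 0 < S x ∧ S x < x)
    (hkey : ∀ x ∈ Set.Ico (0:ℝ) a, x ∉ P →
      1 ≤ (deriv S x) ^ 2 - deriv (deriv S) x * S x) :
    Tendsto (fun u => (u^2*(1 + deriv S u) - S u*(u + S u))/(S u * u)) (𝓝[>] 0) (𝓝 0) := by
  have h0mem : (0:ℝ) ∈ Set.Ico 0 a := ⟨le_refl _, ha⟩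
  have hc := deriv_zero_eq_one ha hdiff hderivcont hdiff2 hS0 hpos hkey
  have hsl : Tendsto (fun x => S x / x) (𝓝[>] (0:ℝ)) (𝓝 1) := by
    have := slope_tendsto (hdiff 0 h0mem) hS0
    rwa [hc] at this
  have hIoo : Set.Ioo (0:ℝ) a ∈ 𝓝[>] (0:ℝ) := Ioo_mem_nhdsGT_of_mem ⟨le_refl _, ha⟩
  have hxS : Tendsto (fun x => x / S x) (𝓝[>] (0:ℝ)) (𝓝 1) := by
    have h1 := hsl.inv₀ (one_ne_zero)
    rw [inv_one] at h1
    refine h1.congr' ?_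
    filter_upwards [hIoo] with x _
    rw [inv_div]
  have hp : Tendsto (deriv S) (𝓝[>] (0:ℝ)) (𝓝 1) := by
    have h2 := (hderivcont 0 h0mem).tendsto
    rw [hc] at h2
    have h3 : 𝓝[>] (0:ℝ) ≤ 𝓝[Set.Ico 0 a] (0:ℝ) := by
      rw [← nhdsWithin_Ioo_eq_nhdsGT ha]
      exact nhdsWithin_mono _ Ioo_subset_Ico_self
    exact h2.mono_left h3
  have hfinal : Tendsto (fun t => (t/S t)*(1 + deriv S t) - 1 - S t/t)
      (𝓝[>] (0:ℝ)) (𝓝 0) := by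
    have h := ((hxS.mul (hp.const_add 1)).sub (tendsto_const_nhds (x := (1:ℝ)))).sub hsl
    norm_num at h
    exact h
  refine hfinal.congr' ?_
  filter_upwards [hIoo] with x hx
  have hsx := hpos x hx
  have hx0 : (0:ℝ) < x := hx.1
  have h1 : S x ≠ 0 := ne_of_gt hsx.1
  have h2 : x ≠ 0 := ne_of_gt hx0
  field_simp
  ring

private lemma psi_nonpos {a : ℝ} (ha : 0 < a) {S : ℝ → ℝ} {P : Finset ℝ}
    (hcont : ContinuousOn S (Set.Icc 0 a))
    (hdiff : ∀ x ∈ Set.Ico (0:ℝ) a, DifferentiableAt ℝ S x)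
    (hderivcont : ContinuousOn (deriv S) (Set.Ico 0 a))
    (hdiff2 : ∀ x ∈ Set.Ico (0:ℝ) a, x ∉ P → DifferentiableAt ℝ (deriv S) x)
    (hS0 : S 0 = 0)
    (hpos : ∀ x ∈ Set.Ioo (0:ℝ) a, 0 < S x ∧ S x < x)
    (hkey : ∀ x ∈ Set.Ico (0:ℝ) a, x ∉ P →
      1 ≤ (deriv S x) ^ 2 - deriv (deriv S) x * S x) :
    ∀ x ∈ Set.Ioo (0:ℝ) a,
      (x^2*(1 + deriv S x) - S x*(x + S x))/(S x * x) ≤ 0 := by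
  intro x₀ hx₀
  by_contra hgt
  push_neg at hgt
  set Psi : ℝ → ℝ := fun u => (u^2*(1 + deriv S u) - S u*(u + S u))/(S u * u) with hPsidef
  have htend := psi_tendsto ha hdiff hderivcont hdiff2 hS0 hpos hkey
  have hev : ∀ᶠ t in 𝓝[>] (0:ℝ), Psi t < Psi x₀ / 2 := htend.eventually_lt_const (by linarith)
  have hIoo : Set.Ioo (0:ℝ) x₀ ∈ 𝓝[>] (0:ℝ) := Ioo_mem_nhdsGT_of_mem ⟨le_refl _, hx₀.1⟩
  obtain ⟨t₂, ht₂, ht₂'⟩ := (hev.and (eventually_of_mem hIoo (fun _ h => h))).exists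
  have hsubIco : Set.Icc t₂ x₀ ⊆ Set.Ico 0 a :=
    fun t ht => ⟨ht₂'.1.le.trans ht.1, lt_of_le_of_lt ht.2 hx₀.2⟩
  have hsubIoo : Set.Icc t₂ x₀ ⊆ Set.Ioo 0 a :=
    fun t ht => ⟨lt_of_lt_of_le ht₂'.1 ht.1, lt_of_le_of_lt ht.2 hx₀.2⟩
  have hsubIcc : Set.Icc t₂ x₀ ⊆ Set.Icc 0 a :=
    fun t ht => ⟨ht₂'.1.le.trans ht.1, (lt_of_le_of_lt ht.2 hx₀.2).le⟩
  have hPsiCont : ContinuousOn Psi (Set.Icc t₂ x₀) := by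
    apply ContinuousOn.div
    · apply ContinuousOn.sub
      · exact ((continuous_pow 2).continuousOn).mul
          (continuousOn_const.add (hderivcont.mono hsubIco))
      · exact (hcont.mono hsubIcc).mul (continuousOn_id.add (hcont.mono hsubIcc))
    · exact (hcont.mono hsubIcc).mul continuousOn_id
    · intro t ht
      exact ne_of_gt (mul_pos (hpos t (hsubIoo ht)).1 (hsubIoo ht).1)
  set E := Set.Icc t₂ x₀ ∩ Psi ⁻¹' (Set.Iic (Psi x₀ / 2)) with hEdef
  have hEclosed : IsClosed E :=
    hPsiCont.preimage_isClosed_of_isClosed isClosed_Icc isClosed_Iic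
  have hEne : E.Nonempty := ⟨t₂, ⟨le_refl _, ht₂'.2.le⟩, ht₂.le⟩
  have hEcpt : IsCompact E :=
    isCompact_Icc.of_isClosed_subset hEclosed (fun t ht => ht.1)
  have hEbdd : BddAbove E := ⟨x₀, fun t ht => ht.1.2⟩
  set x₁ := sSup E with hx₁def
  have hx₁E : x₁ ∈ E := hEcpt.sSup_mem hEne
  obtain ⟨hx₁Icc, hx₁le⟩ := hx₁E
  have hx₁le' : Psi x₁ ≤ Psi x₀ / 2 := hx₁le
  have hx₁x₀ : x₁ < x₀ := by
    rcases lt_or_eq_of_le hx₁Icc.2 with h | h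
    · exact h
    · rw [h] at hx₁le'; linarith
  have hgt' : ∀ u ∈ Set.Ioo x₁ x₀, 0 < Psi u := by
    intro u hu
    by_contra hle
    push_neg at hle
    have huE : u ∈ E := ⟨⟨hx₁Icc.1.trans hu.1.le, hu.2.le⟩, by
      simp only [Set.mem_preimage, Set.mem_Iic]; linarith⟩
    exact absurd (le_csSup hEbdd huE) (not_le.2 hu.1)
  have hanti : Psi x₀ ≤ Psi x₁ := by
    apply antitone_aux P Psi x₁ x₀ hx₁x₀.le
    · exact hPsiCont.mono (Set.Icc_subset_Icc hx₁Icc.1 le_rfl)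
    · intro t ht htP
      have ht' : t ∈ Set.Ioo (0:ℝ) a :=
        hsubIoo ⟨hx₁Icc.1.trans ht.1.le, ht.2.le⟩
      obtain ⟨d, hd, hdd⟩ := psi_deriv hdiff hdiff2 hpos hkey ht' htP (le_of_lt (hgt' t ht))
      exact ⟨d, hd.le, hdd⟩
  linarith

theorem generalized_redheffer_strict (a : ℝ) (ha : 0 < a) (S : ℝ → ℝ) (P : Finset ℝ)
    (hcont : ContinuousOn S (Set.Icc 0 a))
    (hdiff : ∀ x ∈ Set.Ico (0:ℝ) a, DifferentiableAt ℝ S x)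
    (hderivcont : ContinuousOn (deriv S) (Set.Ico 0 a))
    (hdiff2 : ∀ x ∈ Set.Ico (0:ℝ) a, x ∉ P → DifferentiableAt ℝ (deriv S) x)
    (hS0 : S 0 = 0) (hSa : S a = 0)
    (hpos : ∀ x ∈ Set.Ioo (0:ℝ) a, 0 < S x ∧ S x < x)
    (hkey : ∀ x ∈ Set.Ico (0:ℝ) a, x ∉ P →
      1 ≤ (deriv S x) ^ 2 - deriv (deriv S) x * S x) :
    ∀ x ∈ Set.Ioo (0:ℝ) a, (a ^ 2 - x ^ 2) / (a ^ 2 + x ^ 2) < S x / x := by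
  intro x hx
  have hx0 : (0:ℝ) < x := hx.1
  have hxa : x < a := hx.2
  have hPsile := psi_nonpos ha hcont hdiff hderivcont hdiff2 hS0 hpos hkey
  set Df : ℝ → ℝ := fun u => (u - S u)/(u^2*(u + S u)) with hDdef
  have hSnn : ∀ t ∈ Set.Icc x a, 0 ≤ S t ∧ 0 < t ∧ 0 < t + S t := by
    intro t ht
    have ht0 : 0 < t := lt_of_lt_of_le hx0 ht.1
    rcases lt_or_eq_of_le ht.2 with hl | he
    · have := hpos t ⟨ht0, hl⟩
      exact ⟨this.1.le, ht0, by linarith [this.1]⟩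
    · subst he
      rw [hSa]
      exact ⟨le_refl _, ht0, by linarith⟩
  have hsubIcc : Set.Icc x a ⊆ Set.Icc 0 a := Set.Icc_subset_Icc hx0.le le_rfl
  have hDcont : ContinuousOn Df (Set.Icc x a) := by
    apply ContinuousOn.div
    · exact continuousOn_id.sub (hcont.mono hsubIcc)
    · exact ((continuous_pow 2).continuousOn).mul (continuousOn_id.add (hcont.mono hsubIcc))
    · intro t ht
      obtain ⟨h1, h2, h3⟩ := hSnn t ht
      exact ne_of_gt (mul_pos (pow_pos h2 2) h3)
  have hDderiv : ∀ t ∈ Set.Ioo x a, HasDerivAt Df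
      (((1 - deriv S t)*(t^2*(t + S t)) - (t - S t)*(2*t*(t + S t) + t^2*(1 + deriv S t)))
        /(t^2*(t + S t))^2) t := by
    intro t ht
    have ht' : t ∈ Set.Ioo (0:ℝ) a := ⟨hx0.trans ht.1, ht.2⟩
    have hS : HasDerivAt S (deriv S t) t := (hdiff t ⟨ht'.1.le, ht'.2⟩).hasDerivAt
    have hnum : HasDerivAt (fun u => u - S u) (1 - deriv S t) t := (hasDerivAt_id t).sub hS
    have hden : HasDerivAt (fun u => u^2*(u + S u))
        (2*t*(t + S t) + t^2*(1 + deriv S t)) t := by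
      have h1 : HasDerivAt (fun u : ℝ => u^2) (2*t) t := by simpa using hasDerivAt_pow 2 t
      have h3 : HasDerivAt (fun u => u + S u) (1 + deriv S t) t := (hasDerivAt_id t).add hS
      exact h1.mul h3
    have hden0 : t^2*(t + S t) ≠ 0 := by
      have := hpos t ht'
      exact ne_of_gt (mul_pos (pow_pos ht'.1 2) (by linarith [this.1]))
    exact hnum.div hden hden0
  have hDnonneg : ∀ t ∈ Set.Ioo x a, 0 ≤ deriv Df t := by
    intro t ht
    have ht' : t ∈ Set.Ioo (0:ℝ) a := ⟨hx0.trans ht.1, ht.2⟩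
    rw [(hDderiv t ht).deriv]
    have hPsit := hPsile t ht'
    have hst : 0 < S t * t := mul_pos (hpos t ht').1 ht'.1
    have hNle : t^2*(1 + deriv S t) - S t*(t + S t) ≤ 0 := by
      by_contra hgt
      push_neg at hgt
      have : 0 < (t^2*(1 + deriv S t) - S t*(t + S t))/(S t * t) := div_pos hgt hst
      linarith
    have hidD : (1 - deriv S t)*(t^2*(t + S t)) - (t - S t)*(2*t*(t + S t) + t^2*(1 + deriv S t))
        = -2*t*(t^2*(1 + deriv S t) - S t*(t + S t)) := by ring
    rw [hidD]
    apply div_nonneg _ (sq_nonneg _)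
    nlinarith [ht'.1]
  have hmono : MonotoneOn Df (Set.Icc x a) := by
    apply monotoneOn_of_deriv_nonneg (convex_Icc x a) hDcont
    · intro t ht
      rw [interior_Icc] at ht
      exact (hDderiv t ht).differentiableAt.differentiableWithinAt
    · intro t ht
      rw [interior_Icc] at ht
      exact hDnonneg t ht
  have hxmem : x ∈ Set.Icc x a := Set.left_mem_Icc.2 hxa.le
  have hamem : a ∈ Set.Icc x a := Set.right_mem_Icc.2 hxa.le
  have hle : Df x ≤ Df a := hmono hxmem hamem hxa.le
  have hne : Df x ≠ Df a := by
    intro heq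
    have hconst : ∀ y ∈ Set.Icc x a, Df y = Df x := by
      intro y hy
      have h1 : Df x ≤ Df y := hmono hxmem hy hy.1
      have h2 : Df y ≤ Df a := hmono hy hamem hy.2
      linarith
    obtain ⟨ξ, hξ, hξP⟩ := (Set.Ioo_infinite hxa).exists_notMem_finset P
    have hξ' : ξ ∈ Set.Ioo (0:ℝ) a := ⟨hx0.trans hξ.1, hξ.2⟩
    have hev : Df =ᶠ[𝓝 ξ] (fun _ => Df x) := by
      filter_upwards [Ioo_mem_nhds hξ.1 hξ.2] with y hy
      exact hconst y (Set.Ioo_subset_Icc_self hy)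
    have hd0 : HasDerivAt Df 0 ξ :=
      (hasDerivAt_const ξ (Df x)).congr_of_eventuallyEq hev
    have hdd := hDderiv ξ hξ
    have huniq := hdd.unique hd0
    have hden0 : (ξ^2*(ξ + S ξ))^2 ≠ 0 := by
      have := hpos ξ hξ'
      exact pow_ne_zero 2 (ne_of_gt (mul_pos (pow_pos hξ'.1 2) (by linarith [this.1])))
    have hnum0 : (1 - deriv S ξ)*(ξ^2*(ξ + S ξ))
        - (ξ - S ξ)*(2*ξ*(ξ + S ξ) + ξ^2*(1 + deriv S ξ)) = 0 := by
      have := div_eq_zero_iff.1 huniq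
      exact this.resolve_right hden0
    have hidD : (1 - deriv S ξ)*(ξ^2*(ξ + S ξ))
        - (ξ - S ξ)*(2*ξ*(ξ + S ξ) + ξ^2*(1 + deriv S ξ))
        = -2*ξ*(ξ^2*(1 + deriv S ξ) - S ξ*(ξ + S ξ)) := by ring
    have hN0 : ξ^2*(1 + deriv S ξ) - S ξ*(ξ + S ξ) = 0 := by
      rw [hidD] at hnum0
      have h2ξ : (-2)*ξ ≠ 0 := by
        intro h
        have : ξ = 0 := by linarith [mul_eq_zero.1 h]
        exact absurd this (ne_of_gt hξ'.1)
      rcases mul_eq_zero.1 hnum0 with h | h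
      · exact absurd h h2ξ
      · exact h
    have hPsiξ : (ξ^2*(1 + deriv S ξ) - S ξ*(ξ + S ξ))/(S ξ * ξ) = 0 := by
      rw [hN0, zero_div]
    obtain ⟨d, hdneg, hdPsi⟩ := psi_deriv hdiff hdiff2 hpos hkey hξ' hξP (le_of_eq hPsiξ.symm)
    have hslope := hasDerivAt_iff_tendsto_slope.1 hdPsi
    have h4 : Tendsto (slope (fun u => (u^2*(1 + deriv S u) - S u*(u + S u))/(S u * u)) ξ)
        (𝓝[<] ξ) (𝓝 d) :=
      hslope.mono_left (nhdsWithin_mono _ (fun y hy => by simpa using ne_of_lt hy))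
    have h5 : ∀ᶠ y in 𝓝[<] ξ,
        slope (fun u => (u^2*(1 + deriv S u) - S u*(u + S u))/(S u * u)) ξ y < d/2 :=
      h4.eventually_lt_const (by linarith)
    have h6 : Set.Ioo (0:ℝ) ξ ∈ 𝓝[<] ξ := Ioo_mem_nhdsLT_of_mem ⟨hξ'.1, le_refl _⟩
    obtain ⟨y, hy1, hy2⟩ := (h5.and (eventually_of_mem h6 (fun _ h => h))).exists
    rw [slope_def_field] at hy1
    rw [hPsiξ] at hy1
    have hyξ : y - ξ < 0 := sub_neg.2 hy2.2
    have hyIoo : y ∈ Set.Ioo (0:ℝ) a := ⟨hy2.1, hy2.2.trans hξ'.2⟩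
    have hPsiy : (y^2*(1 + deriv S y) - S y*(y + S y))/(S y * y) ≤ 0 := hPsile y hyIoo
    have h7 : ((y^2*(1 + deriv S y) - S y*(y + S y))/(S y * y) - 0) / (y - ξ) < 0 :=
      lt_trans hy1 (by linarith)
    rcases div_neg_iff.1 h7 with ⟨h8, h9⟩ | ⟨h8, h9⟩
    · linarith
    · linarith
  have hlt : Df x < Df a := lt_of_le_of_ne hle hne
  have hDa : Df a = 1/a^2 := by
    simp only [hDdef, hSa, sub_zero, add_zero]
    rw [div_eq_div_iff (ne_of_gt (mul_pos (pow_pos ha 2) ha)) (ne_of_gt (pow_pos ha 2))]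
    ring
  rw [hDa] at hlt
  have hsx := hpos x hx
  have hd1 : 0 < x^2*(x + S x) := mul_pos (pow_pos hx0 2) (by linarith [hsx.1])
  have hd2 : 0 < a^2 := pow_pos ha 2
  rw [hDdef] at hlt
  simp only at hlt
  rw [div_lt_div_iff₀ hd1 hd2] at hlt
  rw [div_lt_div_iff₀ (by positivity) hx0]
  nlinarith [hlt]
end

section
/- For p > 1, π_p := 2∫₀¹ (1 − t^p)^(−1/p) dt equals 2π/(p·sin(π/p)). -/
open Real MeasureTheory Set

theorem pi_p_eq (p : ℝ) (hp : 1 < p) :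
    2 * ∫ t in (0:ℝ)..1, (1 - t ^ p) ^ (-1 / p) = 2 * π / (p * Real.sin (π / p)) := by
  have hp0 : (0:ℝ) < p := lt_trans one_pos hp
  set s : ℝ := 1 / p with hs_def
  have hs0 : 0 < s := by positivity
  have hs1 : s < 1 := by rw [hs_def, div_lt_one hp0]; exact hp
  -- image of (0,1) under t ↦ t^p
  have himg : (fun t : ℝ => t ^ p) '' Ioo 0 1 = Ioo (0:ℝ) 1 := by
    ext x
    constructor
    · rintro ⟨t, ⟨ht0, ht1⟩, rfl⟩
      exact ⟨Real.rpow_pos_of_pos ht0 p, Real.rpow_lt_one ht0.le ht1 hp0⟩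
    · rintro ⟨hx0, hx1⟩
      refine ⟨x ^ (1/p), ⟨Real.rpow_pos_of_pos hx0 _,
        Real.rpow_lt_one hx0.le hx1 (by positivity)⟩, ?_⟩
      show (x ^ (1/p)) ^ p = x
      rw [← Real.rpow_mul hx0.le, one_div_mul_cancel hp0.ne', Real.rpow_one]
  -- change of variables u = t^p
  have key : (∫ t in Ioo (0:ℝ) 1, (1 - t ^ p) ^ (-1/p))
      = ∫ u in Ioo (0:ℝ) 1, (1/p) * (u ^ (s - 1) * (1 - u) ^ (-s)) := by
    have hinj : InjOn (fun t : ℝ => t ^ p) (Ioo 0 1) := by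
      have hmono : StrictMonoOn (fun t : ℝ => t ^ p) (Ioo 0 1) :=
        fun a ha b hb hab => Real.rpow_lt_rpow ha.1.le hab hp0
      exact hmono.injOn
    have := integral_image_eq_integral_abs_deriv_smul (s := Ioo (0:ℝ) 1)
      (f := fun t : ℝ => t ^ p) (f' := fun t : ℝ => p * t ^ (p - 1)) measurableSet_Ioo
      (fun x hx => by
        simpa [mul_comm] using
          (Real.hasDerivAt_rpow_const (p := p) (Or.inl hx.1.ne')).hasDerivWithinAt)
      hinj (fun u => (1/p) * (u ^ (s - 1) * (1 - u) ^ (-s)))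
    rw [himg] at this
    rw [this]
    apply setIntegral_congr_fun measurableSet_Ioo
    intro t ht
    dsimp only
    have ht0 : (0:ℝ) < t := ht.1
    have h1 : (t ^ p) ^ (s - 1) = t ^ (1 - p) := by
      rw [← Real.rpow_mul ht0.le]
      congr 1
      rw [hs_def]; field_simp
    have habs : |p * t ^ (p - 1)| = p * t ^ (p - 1) :=
      abs_of_pos (mul_pos hp0 (Real.rpow_pos_of_pos ht0 _))
    have h2 : t ^ (p - 1) * t ^ (1 - p) = 1 := by
      rw [← Real.rpow_add ht0]
      norm_num
    rw [smul_eq_mul, habs, h1,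
      show p * t ^ (p - 1) * (1/p * (t ^ (1 - p) * (1 - t ^ p) ^ (-s)))
        = (p * (1/p)) * ((t ^ (p - 1) * t ^ (1 - p)) * (1 - t ^ p) ^ (-s)) from by ring,
      h2, mul_one_div_cancel hp0.ne', one_mul, one_mul,
      show (-1)/p = -s from by rw [hs_def]; ring]
  -- the beta integral
  have hbeta : Complex.betaIntegral s (1 - s)
      = ((∫ u in (0:ℝ)..1, u ^ (s - 1) * (1 - u) ^ (-s) : ℝ) : ℂ) := by
    rw [Complex.betaIntegral, ← intervalIntegral.integral_ofReal]
    apply intervalIntegral.integral_congr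
    intro x hx
    rw [Set.uIcc_of_le zero_le_one] at hx
    obtain ⟨hx0, hx1⟩ := hx
    push_cast
    rw [Complex.ofReal_cpow hx0, Complex.ofReal_cpow (by linarith : (0:ℝ) ≤ 1 - x)]
    push_cast
    ring_nf
  have hGamma : Complex.Gamma s * Complex.Gamma (1 - s) = Complex.betaIntegral s (1 - s) := by
    have h := Complex.Gamma_mul_Gamma_eq_betaIntegral (s := (s:ℂ)) (t := 1 - (s:ℂ))
      (by simpa using hs0) (by simp [Complex.sub_re]; linarith)
    rwa [add_sub_cancel, Complex.Gamma_one, one_mul] at h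
  have hI : (∫ u in (0:ℝ)..1, u ^ (s - 1) * (1 - u) ^ (-s)) = π / Real.sin (π * s) := by
    have h1 : ((∫ u in (0:ℝ)..1, u ^ (s - 1) * (1 - u) ^ (-s) : ℝ) : ℂ)
        = ((Real.Gamma s * Real.Gamma (1 - s) : ℝ) : ℂ) := by
      rw [← hbeta, ← hGamma, show (1 - (s:ℂ)) = ((1 - s : ℝ) : ℂ) by push_cast; ring,
        Complex.Gamma_ofReal, Complex.Gamma_ofReal, Complex.ofReal_mul]
    rw [Complex.ofReal_inj] at h1
    rw [h1, Real.Gamma_mul_Gamma_one_sub]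
  -- put it together
  rw [intervalIntegral.integral_of_le zero_le_one, integral_Ioc_eq_integral_Ioo, key,
    integral_const_mul, ← integral_Ioc_eq_integral_Ioo,
    ← intervalIntegral.integral_of_le zero_le_one, hI,
    show π * s = π / p from by rw [hs_def]; ring]
  ring
end

section
/- Let p, q ≥ 2. Then for all real x with 0 < x ≤ π_{p,q}, (π_{p,q}² − x²)/(π_{p,q}² + x²) ≤ sin_{p,q}(x)/x. -/
open Real MeasureTheory intervalIntegral Set

private lemma aux_nonneg_RH (f f' : ℝ → ℝ) (hf : ∀ t, HasDerivAt f (f' t) t) (h0 : f 0 = 0)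
    (hf' : ∀ t, 0 ≤ t → 0 ≤ f' t) {x : ℝ} (hx : 0 ≤ x) : 0 ≤ f x := by
  have hmono : MonotoneOn f (Set.Ici 0) := by
    apply monotoneOn_of_deriv_nonneg (convex_Ici 0)
    · exact fun t _ => (hf t).differentiableAt.continuousAt.continuousWithinAt
    · exact fun t _ => (hf t).differentiableAt.differentiableWithinAt
    · intro t ht
      rw [interior_Ici] at ht
      rw [(hf t).deriv]
      exact hf' t ht.le
  calc (0:ℝ) = f 0 := h0.symm
  _ ≤ f x := hmono Set.self_mem_Ici hx hx

private lemma RH_B1 {t : ℝ} (ht : 0 ≤ t) : t - t^3/6 ≤ sin t := by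
  have := aux_nonneg_RH (fun t => sin t - t + t^3/6) (fun t => cos t - 1 + t^2/2)
    (fun t => by
      have h1 : HasDerivAt (fun t : ℝ => sin t - t + t^3/6)
          (cos t - 1 + (3 * t^(3-1))/6) t :=
        ((Real.hasDerivAt_sin t).sub (hasDerivAt_id t)).add
          ((hasDerivAt_pow 3 t).div_const 6)
      convert h1 using 1; push_cast; ring)
    (by norm_num)
    (fun t _ => by nlinarith [Real.one_sub_sq_div_two_le_cos (x := t)]) ht
  linarith

private lemma RH_B2 {t : ℝ} (ht : 0 ≤ t) : cos t ≤ 1 - t^2/2 + t^4/24 := by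
  have := aux_nonneg_RH (fun t => 1 - t^2/2 + t^4/24 - cos t)
    (fun t => -t + t^3/6 + sin t)
    (fun t => by
      have h1 : HasDerivAt (fun t : ℝ => 1 - t^2/2 + t^4/24 - cos t)
          (0 - (2*t^(2-1))/2 + (4*t^(4-1))/24 - (-sin t)) t :=
        (((hasDerivAt_const t (1:ℝ)).sub ((hasDerivAt_pow 2 t).div_const 2)).add
          ((hasDerivAt_pow 4 t).div_const 24)).sub (Real.hasDerivAt_cos t)
      convert h1 using 1; push_cast; ring)
    (by norm_num)
    (fun t ht' => by nlinarith [RH_B1 ht']) ht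
  linarith

private lemma RH_B3 {t : ℝ} (ht : 0 ≤ t) : sin t ≤ t - t^3/6 + t^5/120 := by
  have := aux_nonneg_RH (fun t => t - t^3/6 + t^5/120 - sin t)
    (fun t => 1 - t^2/2 + t^4/24 - cos t)
    (fun t => by
      have h1 : HasDerivAt (fun t : ℝ => t - t^3/6 + t^5/120 - sin t)
          (1 - (3*t^(3-1))/6 + (5*t^(5-1))/120 - cos t) t :=
        (((hasDerivAt_id t).sub ((hasDerivAt_pow 3 t).div_const 6)).add
          ((hasDerivAt_pow 5 t).div_const 120)).sub (Real.hasDerivAt_sin t)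
      convert h1 using 1; push_cast; ring)
    (by norm_num)
    (fun t ht' => by nlinarith [RH_B2 ht']) ht
  linarith

private lemma RH_B4 {t : ℝ} (ht : 0 ≤ t) : 1 - t^2/2 + t^4/24 - t^6/720 ≤ cos t := by
  have := aux_nonneg_RH (fun t => cos t - 1 + t^2/2 - t^4/24 + t^6/720)
    (fun t => -sin t + t - t^3/6 + t^5/120)
    (fun t => by
      have h1 : HasDerivAt (fun t : ℝ => cos t - 1 + t^2/2 - t^4/24 + t^6/720)
          (-sin t - 0 + (2*t^(2-1))/2 - (4*t^(4-1))/24 + (6*t^(6-1))/720) t :=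
        ((((Real.hasDerivAt_cos t).sub (hasDerivAt_const t (1:ℝ))).add
          ((hasDerivAt_pow 2 t).div_const 2)).sub
          ((hasDerivAt_pow 4 t).div_const 24)).add ((hasDerivAt_pow 6 t).div_const 720)
      convert h1 using 1; push_cast; ring)
    (by norm_num)
    (fun t ht' => by nlinarith [RH_B3 ht']) ht
  linarith

private lemma RH_B5 {t : ℝ} (ht : 0 ≤ t) : t - t^3/6 + t^5/120 - t^7/5040 ≤ sin t := by
  have := aux_nonneg_RH (fun t => sin t - t + t^3/6 - t^5/120 + t^7/5040)
    (fun t => cos t - 1 + t^2/2 - t^4/24 + t^6/720)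
    (fun t => by
      have h1 : HasDerivAt (fun t : ℝ => sin t - t + t^3/6 - t^5/120 + t^7/5040)
          (cos t - 1 + (3*t^(3-1))/6 - (5*t^(5-1))/120 + (7*t^(7-1))/5040) t :=
        ((((Real.hasDerivAt_sin t).sub (hasDerivAt_id t)).add
          ((hasDerivAt_pow 3 t).div_const 6)).sub
          ((hasDerivAt_pow 5 t).div_const 120)).add ((hasDerivAt_pow 7 t).div_const 5040)
      convert h1 using 1; push_cast; ring)
    (by norm_num)
    (fun t ht' => by nlinarith [RH_B4 ht']) ht
  linarith

private lemma redheffer_classical_RH {t : ℝ} (ht : 0 < t) (ht2 : t ≤ π/2) :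
    t * (π^2 - t^2) ≤ sin t * (π^2 + t^2) := by
  have h5 := RH_B5 ht.le
  have hpi1 : (3.1415 : ℝ) < π := Real.pi_gt_d4
  have hpi2 : π < 3.1416 := Real.pi_lt_d4
  have hp2a : π^2 < 9.87 := by nlinarith
  have hp2b : (9.86:ℝ) < π^2 := by nlinarith
  have hs2 : t^2 ≤ 2.4675 := by nlinarith
  have hsnn : (0:ℝ) ≤ t^2 := sq_nonneg t
  have inner : 0 ≤ (2 - π^2/6) + (π^2/120 - 1/6)*t^2 + (1/120 - π^2/5040)*(t^2)^2
      - (t^2)^3/5040 := by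
    nlinarith [mul_nonneg (mul_nonneg hsnn hsnn) hsnn, sq_nonneg (t^2),
      mul_nonneg (sub_nonneg.2 hs2) hsnn,
      mul_nonneg (mul_nonneg (sub_nonneg.2 hs2) hsnn) hsnn]
  have key : 0 ≤ (t - t^3/6 + t^5/120 - t^7/5040) * (π^2+t^2) - t*(π^2-t^2) := by
    have h3 : (0:ℝ) ≤ t^3 := by positivity
    nlinarith [mul_nonneg h3 inner]
  nlinarith [mul_le_mul_of_nonneg_right h5 (by positivity : (0:ℝ) ≤ π^2 + t^2)]

private lemma RH_neg_one_div_ne {p : ℝ} (hp : 2 ≤ p) : (-1/p : ℝ) ≠ 0 := by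
  have : (0:ℝ) < 1/p := by positivity
  rw [neg_div]; intro hc; linarith

private lemma RH_neg_one_div_nonpos {p : ℝ} (hp : 2 ≤ p) : (-1/p : ℝ) ≤ 0 := by
  apply div_nonpos_of_nonpos_of_nonneg <;> linarith

private lemma RH_f_nonneg {p : ℝ} (hp : 2 ≤ p) (b : ℝ) : 0 ≤ b ^ (-1/p) := by
  rcases le_or_gt 0 b with hb | hb
  · exact Real.rpow_nonneg hb _
  · rw [Real.rpow_def_of_neg hb]
    apply mul_nonneg (Real.exp_nonneg _)
    apply Real.cos_nonneg_of_mem_Icc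
    have hπ : 0 < π := Real.pi_pos
    have hpp : π / p ≤ π / 2 := div_le_div_of_nonneg_left hπ.le (by norm_num) hp
    have hpp0 : 0 < π / p := by positivity
    have heq : -1/p * π = -(π/p) := by ring
    constructor
    · rw [heq]; linarith
    · rw [heq]; linarith

private lemma RH_tq_le_t2 {q t : ℝ} (hq : 2 ≤ q) (h0 : 0 ≤ t) (h1 : t ≤ 1) : t ^ q ≤ t ^ 2 := by
  rcases eq_or_lt_of_le h0 with h | h
  · rw [← h, Real.zero_rpow (by linarith : q ≠ 0)]
    norm_num
  · calc t ^ q ≤ t ^ (2:ℝ) := Real.rpow_le_rpow_of_exponent_ge h h1 hq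
    _ = t ^ (2:ℕ) := by rw [← Real.rpow_natCast t 2]; norm_num

private lemma RH_f_le_g {p q t : ℝ} (hp : 2 ≤ p) (hq : 2 ≤ q) (h0 : 0 ≤ t) (h1 : t ≤ 1) :
    (1 - t ^ q) ^ (-1/p) ≤ (1 - t ^ 2) ^ (-1/2 : ℝ) := by
  have hple : -1/2 ≤ -1/p := by
    rw [div_le_div_iff₀ (by norm_num) (by linarith)]
    linarith
  have hpneg := RH_neg_one_div_nonpos hp
  rcases eq_or_lt_of_le h1 with h | h
  · subst h
    rw [Real.one_rpow]
    simp [Real.zero_rpow (RH_neg_one_div_ne hp),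
      Real.zero_rpow (show (-1/2:ℝ) ≠ 0 by norm_num)]
  · have ht2 : t ^ 2 < 1 := by nlinarith
    have hb2 : 0 < 1 - t ^ 2 := by linarith
    have hb1 : 1 - t ^ 2 ≤ 1 - t ^ q := by linarith [RH_tq_le_t2 hq h0 h1]
    calc (1 - t ^ q) ^ (-1/p) ≤ (1 - t ^ 2) ^ (-1/p) :=
          Real.rpow_le_rpow_of_nonpos hb2 hb1 hpneg
    _ ≤ (1 - t ^ 2) ^ (-1/2 : ℝ) :=
          Real.rpow_le_rpow_of_exponent_ge hb2 (by nlinarith) hple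

private lemma RH_h_int : IntervalIntegrable (fun t : ℝ => (1 - t) ^ (-1/2 : ℝ)) volume 0 1 := by
  have h := intervalIntegrable_rpow' (a := 0) (b := 1) (r := -1/2) (by norm_num)
  have := h.comp_sub_left 1
  simpa using this.symm

private lemma RH_rpow_neg_half {b : ℝ} (hb : 0 ≤ b) : b ^ (-1/2 : ℝ) = 1 / √b := by
  rw [show (-1/2 : ℝ) = -(1/2) by norm_num, Real.rpow_neg hb, Real.sqrt_eq_rpow, one_div]
  norm_num

private lemma RH_g_le_h {t : ℝ} (h0 : 0 ≤ t) (h1 : t ≤ 1) :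
    (1 - t^2) ^ (-1/2 : ℝ) ≤ (1 - t) ^ (-1/2 : ℝ) := by
  rcases eq_or_lt_of_le h1 with h | h
  · subst h; norm_num
  · exact Real.rpow_le_rpow_of_nonpos (by linarith) (by nlinarith) (by norm_num)

private lemma RH_g_meas : Measurable (fun t : ℝ => (1 - t^2) ^ (-1/2 : ℝ)) := by
  fun_prop

private lemma RH_g_int : IntervalIntegrable (fun t : ℝ => (1 - t^2) ^ (-1/2 : ℝ)) volume 0 1 := by
  apply RH_h_int.mono_fun RH_g_meas.aestronglyMeasurable
  rw [Set.uIoc_of_le (by norm_num : (0:ℝ) ≤ 1)]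
  refine (ae_restrict_iff' measurableSet_Ioc).2 (.of_forall fun t ht => ?_)
  simp only [Real.norm_eq_abs]
  rw [abs_of_nonneg (Real.rpow_nonneg (by nlinarith [ht.1.le, ht.2] : (0:ℝ) ≤ 1 - t^2) _),
    abs_of_nonneg (Real.rpow_nonneg (by linarith [ht.2] : (0:ℝ) ≤ 1 - t) _)]
  exact RH_g_le_h ht.1.le ht.2

private lemma RH_f_meas (p q : ℝ) : Measurable (fun t : ℝ => (1 - t^q) ^ (-1/p)) := by
  fun_prop

private lemma RH_f_int {p q : ℝ} (hp : 2 ≤ p) (hq : 2 ≤ q) :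
    IntervalIntegrable (fun t : ℝ => (1 - t^q) ^ (-1/p)) volume 0 1 := by
  apply RH_h_int.mono_fun (RH_f_meas p q).aestronglyMeasurable
  rw [Set.uIoc_of_le (by norm_num : (0:ℝ) ≤ 1)]
  refine (ae_restrict_iff' measurableSet_Ioc).2 (.of_forall fun t ht => ?_)
  simp only [Real.norm_eq_abs]
  rw [abs_of_nonneg (RH_f_nonneg hp _),
    abs_of_nonneg (Real.rpow_nonneg (by linarith [ht.2] : (0:ℝ) ≤ 1 - t) _)]
  exact (RH_f_le_g hp hq ht.1.le ht.2).trans (RH_g_le_h ht.1.le ht.2)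

private lemma RH_arcsin_integral {y : ℝ} (h0 : 0 ≤ y) (h1 : y < 1) :
    ∫ t in (0:ℝ)..y, (1 - t^2) ^ (-1/2 : ℝ) = arcsin y := by
  have hderiv : ∀ t ∈ Set.uIcc (0:ℝ) y, HasDerivAt arcsin ((1 - t^2) ^ (-1/2 : ℝ)) t := by
    intro t ht
    rw [Set.uIcc_of_le h0] at ht
    have ht1 : t < 1 := lt_of_le_of_lt ht.2 h1
    have h := Real.hasDerivAt_arcsin (by linarith [ht.1] : t ≠ -1) (ne_of_lt ht1)
    rwa [← RH_rpow_neg_half (by nlinarith [ht.1, ht1] : (0:ℝ) ≤ 1 - t^2)] at h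
  have hint : IntervalIntegrable (fun t : ℝ => (1 - t^2) ^ (-1/2 : ℝ)) volume 0 y := by
    apply RH_g_int.mono_set
    rw [Set.uIcc_of_le h0, Set.uIcc_of_le (by norm_num : (0:ℝ) ≤ 1)]
    exact Set.Icc_subset_Icc le_rfl h1.le
  rw [integral_eq_sub_of_hasDerivAt hderiv hint, Real.arcsin_zero, sub_zero]

private lemma RH_int_g_one : ∫ t in (0:ℝ)..1, (1 - t^2) ^ (-1/2 : ℝ) = π/2 := by
  set F := fun x : ℝ => ∫ t in (0:ℝ)..x, (1 - t^2) ^ (-1/2 : ℝ) with hF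
  have hcont : ContinuousOn F (Set.uIcc 0 1) :=
    continuousOn_primitive_interval' RH_g_int Set.left_mem_uIcc
  have hne : (nhdsWithin (1:ℝ) (Set.Ico (0:ℝ) 1)).NeBot := by
    rw [← mem_closure_iff_nhdsWithin_neBot, closure_Ico (by norm_num : (0:ℝ) ≠ 1)]
    exact ⟨by norm_num, le_refl 1⟩
  have h1 : Filter.Tendsto F (nhdsWithin 1 (Set.Ico (0:ℝ) 1)) (nhds (F 1)) := by
    have := hcont 1 (by rw [Set.uIcc_of_le (by norm_num : (0:ℝ) ≤ 1)]; exact ⟨by norm_num, le_rfl⟩)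
    rw [Set.uIcc_of_le (by norm_num : (0:ℝ) ≤ 1)] at this
    exact (this.mono Set.Ico_subset_Icc_self)
  have h2 : Filter.Tendsto F (nhdsWithin 1 (Set.Ico (0:ℝ) 1)) (nhds (arcsin 1)) := by
    have harc : Filter.Tendsto arcsin (nhdsWithin 1 (Set.Ico (0:ℝ) 1)) (nhds (arcsin 1)) :=
      (Real.continuous_arcsin.continuousAt).continuousWithinAt
    apply harc.congr'
    filter_upwards [self_mem_nhdsWithin] with y hy
    exact (RH_arcsin_integral hy.1 hy.2).symm
  have := tendsto_nhds_unique h1 h2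
  rw [Real.arcsin_one] at this
  exact this

private lemma RH_half {p q c : ℝ} (hp : 2 ≤ p) (hq : 2 ≤ q) (hcpi : c ≤ π) {S : ℝ → ℝ}
    {x : ℝ} (hx : 0 < x) (hx2 : x ≤ c/2)
    (hinv : (∫ t in (0:ℝ)..(S x), (1 - t ^ q) ^ (-1/p)) = x) :
    x * (c^2 - x^2) ≤ S x * (c^2 + x^2) := by
  have hc : 0 < c := by linarith
  have hxpi : x ≤ π/2 := by linarith
  have hC : (0:ℝ) < c^2 + x^2 := by positivity
  -- S x is nonnegative
  have hS0 : 0 ≤ S x := by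
    by_contra hneg
    push_neg at hneg
    have hnn : 0 ≤ ∫ t in (S x)..(0:ℝ), (1 - t ^ q) ^ (-1/p) :=
      intervalIntegral.integral_nonneg hneg.le (fun u _ => RH_f_nonneg hp _)
    rw [intervalIntegral.integral_symm] at hinv
    linarith
  rcases lt_or_ge (S x) 1 with hS1 | hS1
  · -- main case: S x ∈ [0,1), so sin x ≤ S x
    have hfle : (∫ t in (0:ℝ)..(S x), (1 - t ^ q) ^ (-1/p)) ≤
        ∫ t in (0:ℝ)..(S x), (1 - t^2) ^ (-1/2 : ℝ) := by
      apply intervalIntegral.integral_mono_on hS0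
      · apply (RH_f_int hp hq).mono_set
        rw [Set.uIcc_of_le hS0, Set.uIcc_of_le (by norm_num : (0:ℝ) ≤ 1)]
        exact Set.Icc_subset_Icc le_rfl hS1.le
      · apply RH_g_int.mono_set
        rw [Set.uIcc_of_le hS0, Set.uIcc_of_le (by norm_num : (0:ℝ) ≤ 1)]
        exact Set.Icc_subset_Icc le_rfl hS1.le
      · exact fun t ht => RH_f_le_g hp hq ht.1 (ht.2.trans hS1.le)
    rw [hinv, RH_arcsin_integral hS0 hS1] at hfle
    have hsin : sin x ≤ S x := by
      have hπ := Real.pi_pos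
      have h1 : sin x ≤ sin (arcsin (S x)) := by
        apply Real.strictMonoOn_sin.monotoneOn
          ⟨by linarith, hxpi⟩
          ⟨Real.neg_pi_div_two_le_arcsin _, Real.arcsin_le_pi_div_two _⟩ hfle
      rwa [Real.sin_arcsin (by linarith : (-1:ℝ) ≤ S x) hS1.le] at h1
    have hred := redheffer_classical_RH hx hxpi
    have hπc : c^2 ≤ π^2 := by nlinarith [Real.pi_pos]
    have hP : (0:ℝ) < π^2 + x^2 := by positivity
    have step1 : x*(c^2 - x^2)*(π^2 + x^2) ≤ x*(π^2 - x^2)*(c^2 + x^2) := by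
      nlinarith [mul_nonneg (mul_nonneg hx.le (sq_nonneg x)) (sub_nonneg.2 hπc)]
    have step2 : x*(π^2 - x^2)*(c^2 + x^2) ≤ sin x*(π^2 + x^2)*(c^2 + x^2) :=
      mul_le_mul_of_nonneg_right hred hC.le
    have step3 : sin x*(π^2 + x^2)*(c^2 + x^2) ≤ S x*(c^2 + x^2)*(π^2 + x^2) := by
      nlinarith [mul_le_mul_of_nonneg_right hsin (mul_pos hP hC).le]
    nlinarith [step1, step2, step3, hP]
  · -- easy case: S x ≥ 1
    have hc315 : c < 3.1416 := lt_of_le_of_lt hcpi Real.pi_lt_d4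
    have key : x*(c^2 - x^2) ≤ c^2 + x^2 := by
      nlinarith [sq_nonneg (x - 1.5), sq_nonneg (c - 3.15), mul_pos hx hx,
        mul_nonneg (mul_nonneg hx.le hx.le) hx.le, sq_nonneg (c - 2*x)]
    have : 1*(c^2 + x^2) ≤ S x*(c^2 + x^2) := mul_le_mul_of_nonneg_right hS1 hC.le
    linarith

theorem redheffer_sin_pq (p q : ℝ) (hp : 2 ≤ p) (hq : 2 ≤ q)
    (pipq : ℝ) (hpipq : pipq = 2 * ∫ t in (0:ℝ)..1, (1 - t ^ q) ^ (-1 / p))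
    (S : ℝ → ℝ)
    (hinv : ∀ x ∈ Set.Icc (0:ℝ) (pipq / 2),
      (∫ t in (0:ℝ)..(S x), (1 - t ^ q) ^ (-1 / p)) = x)
    (hodd : ∀ x : ℝ, S (-x) = -S x)
    (hrefl : ∀ x : ℝ, S (pipq - x) = S x)
    (hanti : ∀ x : ℝ, S (x + pipq) = -S x) :
    ∀ x : ℝ, 0 < x → x ≤ pipq →
      (pipq ^ 2 - x ^ 2) / (pipq ^ 2 + x ^ 2) ≤ S x / x := by
  intro x hx hxc
  have hc : 0 < pipq := lt_of_lt_of_le hx hxc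
  have hcpi : pipq ≤ π := by
    have hint : (∫ t in (0:ℝ)..1, (1 - t ^ q) ^ (-1/p)) ≤
        ∫ t in (0:ℝ)..1, (1 - t^2) ^ (-1/2 : ℝ) := by
      apply intervalIntegral.integral_mono_on zero_le_one (RH_f_int hp hq) RH_g_int
      exact fun t ht => RH_f_le_g hp hq ht.1 ht.2
    rw [RH_int_g_one] at hint
    rw [hpipq]
    linarith
  have hC : (0:ℝ) < pipq^2 + x^2 := by positivity
  rw [div_le_div_iff₀ hC hx]
  rcases le_or_gt x (pipq/2) with hhalf | hhalf
  · have := RH_half hp hq hcpi hx hhalf (hinv x ⟨hx.le, hhalf⟩)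
    linarith
  · -- reflect
    have hyx : pipq - x < pipq/2 := by linarith
    rcases eq_or_lt_of_le hxc with hxe | hxlt
    · -- x = pipq
      subst hxe
      have hS0 : S 0 = 0 := by
        have := hodd 0
        simp at this
        linarith
      have hSc : S x = 0 := by
        have := hrefl x
        rw [sub_self] at this
        rw [← this, hS0]
      rw [hSc]
      ring_nf
      nlinarith [sq_nonneg x]
    · set y := pipq - x with hy
      have hy0 : 0 < y := by simp [hy]; linarith
      have hy2 : y ≤ pipq/2 := by rw [hy]; linarith
      have hSy := RH_half hp hq hcpi hy0 hy2 (hinv y ⟨hy0.le, hy2⟩)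
      have hSyx : S y = S x := hrefl x
      rw [hSyx] at hSy
      have hCy : (0:ℝ) < pipq^2 + y^2 := by positivity
      have id1 : y*(pipq^2 - y^2)*(pipq^2 + x^2) - x*(pipq^2 - x^2)*(pipq^2 + y^2)
          = x^2*y^2*(x - y) := by rw [hy]; ring
      have hxy : y ≤ x := by rw [hy]; linarith
      have hmono : x*(pipq^2 - x^2)*(pipq^2 + y^2) ≤ y*(pipq^2 - y^2)*(pipq^2 + x^2) := by
        nlinarith [mul_nonneg (mul_nonneg (sq_nonneg x) (sq_nonneg y)) (sub_nonneg.2 hxy)]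
      have hchain : x*(pipq^2 - x^2)*(pipq^2 + y^2) ≤ S x*(pipq^2 + x^2)*(pipq^2 + y^2) := by
        have := mul_le_mul_of_nonneg_right hSy hC.le
        nlinarith [this, hmono]
      nlinarith [hchain, hCy]
end

section
/- Let p ≥ q* and q ≥ 2 with q* = q/(q−1), and define g(t) := (p−q)t^{2p} + (p²/((p−1)q))t^{2p−2} + (2q − p − pq)t^p + (p−1)q − p²/((p−1)q) for t ∈ [0,1]. Then g(t) ≥ 0 for all t ∈ [0,1], with g(1) = 0. -/
/-!
Put `A = p² / ((p - 1) q)`. The hypothesis `q / (q - 1) ≤ p` says `p ≤ (p - 1) q`, which makes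
`g 0 = (p - 1) q - A` nonnegative. For `p ≤ 2`, `g` is a nonnegative combination of the weighted
AM-GM gap `p t^(2p-2) + (2 - p) t^(2p) - 2 t^p`, of `t^p - t^(2p)` and of `1 - t^(2p-2)`.
For `p > 2`, `g' t = (p / q) t^(p-1) L(t^p, t^(p-2))` with `L` affine and nonpositive on
the triangle `0 ≤ u ≤ v ≤ 1`, so `g` decreases on `[0, 1]` to `g 1 = 0`.
-/

open Real Set

noncomputable def redhefferG (p q t : ℝ) : ℝ :=
  (p - q) * t ^ (2 * p) + p ^ 2 / ((p - 1) * q) * t ^ (2 * p - 2)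
    + (2 * q - p - p * q) * t ^ p + (p - 1) * q - p ^ 2 / ((p - 1) * q)

theorem redhefferG_one (p q : ℝ) : redhefferG p q 1 = 0 := by
  simp only [redhefferG, one_rpow]
  ring

theorem rpow_weighted_le {t a b w₁ w₂ : ℝ} (ht : 0 ≤ t) (hw₁ : 0 ≤ w₁) (hw₂ : 0 ≤ w₂)
    (hw : w₁ + w₂ = 1) (hab : w₁ * a + w₂ * b ≠ 0) :
    t ^ (w₁ * a + w₂ * b) ≤ w₁ * t ^ a + w₂ * t ^ b := by
  calc t ^ (w₁ * a + w₂ * b) = (t ^ a) ^ w₁ * (t ^ b) ^ w₂ := by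
        rw [rpow_add' ht hab, ← rpow_mul ht, ← rpow_mul ht, mul_comm a, mul_comm b]
    _ ≤ w₁ * t ^ a + w₂ * t ^ b :=
        geom_mean_le_arith_mean2_weighted hw₁ hw₂ (rpow_nonneg ht _) (rpow_nonneg ht _) hw

theorem redhefferG_eq_sum {p q : ℝ} (hp0 : p ≠ 0) (hp1 : p ≠ 1) (hq : q ≠ 0) (t : ℝ) :
    redhefferG p q t =
      (p - 1) * q / p * (p * t ^ (2 * p - 2) + (2 - p) * t ^ (2 * p) - 2 * t ^ p)
        + (4 * p * q - p ^ 2 - p ^ 2 * q - 2 * q) / p * (t ^ p - t ^ (2 * p))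
        + ((p - 1) * q - p ^ 2 / ((p - 1) * q)) * (1 - t ^ (2 * p - 2)) := by
  have : p - 1 ≠ 0 := sub_ne_zero.mpr hp1
  simp only [redhefferG]
  field_simp
  ring

theorem redhefferG_nonneg_of_le_two {p q t : ℝ} (hp1 : 1 < p) (hp2 : p ≤ 2)
    (hpq : p ≤ (p - 1) * q) (hq : 2 ≤ q) (ht : t ∈ Icc (0 : ℝ) 1) :
    0 ≤ redhefferG p q t := by
  obtain ⟨ht0, ht1⟩ := ht
  have hA : 0 < (p - 1) * q := by linarith
  have hamgm : 2 * t ^ p ≤ p * t ^ (2 * p - 2) + (2 - p) * t ^ (2 * p) := by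
    have h := rpow_weighted_le (a := 2 * p - 2) (b := 2 * p) ht0 (w₁ := p / 2)
      (w₂ := (2 - p) / 2) (by linarith) (by linarith) (by ring) (by nlinarith)
    rw [show p / 2 * (2 * p - 2) + (2 - p) / 2 * (2 * p) = p by ring] at h
    linarith
  have hmid : 0 ≤ 4 * p * q - p ^ 2 - p ^ 2 * q - 2 * q := by
    have h1 : 0 ≤ (2 - p) * ((p - 1) * q - p) := mul_nonneg (by linarith) (by linarith)
    have h2 : 0 ≤ p * (q + 2 - 2 * p) := mul_nonneg (by linarith) (by linarith)
    linarith
  have hconst : 0 ≤ (p - 1) * q - p ^ 2 / ((p - 1) * q) := by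
    rw [sub_nonneg, div_le_iff₀ hA]
    nlinarith
  have hdec : t ^ (2 * p) ≤ t ^ p :=
    rpow_le_rpow_of_exponent_ge' ht0 ht1 (by linarith) (by linarith)
  have hle_one : t ^ (2 * p - 2) ≤ 1 := rpow_le_one ht0 ht1 (by linarith)
  rw [redhefferG_eq_sum (by linarith) hp1.ne' (by linarith)]
  have hp0 : (0 : ℝ) ≤ p := by linarith
  refine add_nonneg (add_nonneg ?_ ?_) ?_
  · exact mul_nonneg (div_nonneg hA.le hp0) (by linarith)
  · exact mul_nonneg (div_nonneg hmid hp0) (by linarith)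
  · exact mul_nonneg hconst (by linarith)

theorem continuous_redhefferG {p : ℝ} (hp : 1 ≤ p) (q : ℝ) : Continuous (redhefferG p q) := by
  have h2p : Continuous fun t : ℝ => t ^ (2 * p) := continuous_rpow_const (by linarith)
  have h2p2 : Continuous fun t : ℝ => t ^ (2 * p - 2) := continuous_rpow_const (by linarith)
  have hp : Continuous fun t : ℝ => t ^ p := continuous_rpow_const (by linarith)
  unfold redhefferG
  fun_prop

theorem hasDerivAt_redhefferG {p q x : ℝ} (hp1 : p ≠ 1) (hq : q ≠ 0) (hx : 0 < x) :
    HasDerivAt (redhefferG p q)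
      (p * x ^ (p - 1) / q
        * (2 * q * (p - q) * x ^ p + 2 * p * x ^ (p - 2) + q * (2 * q - p - p * q))) x := by
  have d2p := (hasDerivAt_rpow_const (p := 2 * p) (.inl hx.ne')).const_mul (p - q)
  have d2p2 := (hasDerivAt_rpow_const (p := 2 * p - 2) (.inl hx.ne')).const_mul
    (p ^ 2 / ((p - 1) * q))
  have dp := (hasDerivAt_rpow_const (p := p) (.inl hx.ne')).const_mul (2 * q - p - p * q)
  refine (((d2p.add d2p2).add dp).add_const _ |>.sub_const _).congr_deriv ?_
  have : p - 1 ≠ 0 := sub_ne_zero.mpr hp1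
  have e1 : x ^ (2 * p - 1) = x ^ (p - 1) * x ^ p := by
    rw [← rpow_add hx]; ring_nf
  have e2 : x ^ (2 * p - 2 - 1) = x ^ (p - 1) * x ^ (p - 2) := by
    rw [← rpow_add hx]; ring_nf
  rw [e1, e2]
  field_simp

theorem redhefferG_deriv_factor_nonpos {p q u v : ℝ} (hp : 2 < p) (hq : 2 ≤ q) (hu : 0 ≤ u)
    (huv : u ≤ v) (hv : v ≤ 1) :
    2 * q * (p - q) * u + 2 * p * v + q * (2 * q - p - p * q) ≤ 0 := by
  -- affine in `(u, v)`, so it suffices to check the vertices of the triangle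
  have h00 : q * (2 * q - p - p * q) ≤ 0 :=
    mul_nonpos_of_nonneg_of_nonpos (by linarith) (by nlinarith)
  have h01 : 2 * p + q * (2 * q - p - p * q) ≤ 0 := by
    nlinarith [mul_le_mul_of_nonneg_right hp.le (by nlinarith : (0 : ℝ) ≤ q ^ 2 + q - 2)]
  have h11 : 2 * q * (p - q) + 2 * p + q * (2 * q - p - p * q) ≤ 0 := by
    nlinarith [mul_nonneg (mul_nonneg (by linarith : (0 : ℝ) ≤ p) (by linarith : 0 ≤ q - 2))
      (by linarith : 0 ≤ q + 1)]
  have := mul_nonpos_of_nonneg_of_nonpos (sub_nonneg.mpr hv) h00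
  have := mul_nonpos_of_nonneg_of_nonpos (sub_nonneg.mpr huv) h01
  have := mul_nonpos_of_nonneg_of_nonpos hu h11
  linarith

theorem antitoneOn_redhefferG {p q : ℝ} (hp : 2 < p) (hq : 2 ≤ q) :
    AntitoneOn (redhefferG p q) (Icc 0 1) := by
  refine antitoneOn_of_hasDerivWithinAt_nonpos (convex_Icc 0 1)
    (continuous_redhefferG (by linarith) q).continuousOn
    (fun x hx => (hasDerivAt_redhefferG (by linarith) (by linarith) ?_).hasDerivWithinAt)
    fun x hx => ?_
  · exact (by rwa [interior_Icc] at hx : x ∈ Ioo (0 : ℝ) 1).1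
  · obtain ⟨hx0, hx1⟩ : x ∈ Ioo (0 : ℝ) 1 := by rwa [interior_Icc] at hx
    exact mul_nonpos_of_nonneg_of_nonpos (by positivity) (redhefferG_deriv_factor_nonpos hp hq
      (rpow_nonneg hx0.le _) (rpow_le_rpow_of_exponent_ge hx0 hx1.le (by linarith))
      (rpow_le_one hx0.le hx1.le (by linarith)))

theorem redhefferG_nonneg {p q t : ℝ} (hp1 : 1 < p) (hpq : p ≤ (p - 1) * q) (hq : 2 ≤ q)
    (ht : t ∈ Icc (0 : ℝ) 1) : 0 ≤ redhefferG p q t := by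
  rcases le_or_gt p 2 with hp2 | hp2
  · exact redhefferG_nonneg_of_le_two hp1 hp2 hpq hq ht
  · calc 0 = redhefferG p q 1 := (redhefferG_one p q).symm
      _ ≤ redhefferG p q t :=
        antitoneOn_redhefferG hp2 hq ht ⟨zero_le_one, le_rfl⟩ ht.2

theorem g_nonneg (p q : ℝ) (hq : 2 ≤ q) (hp : q / (q - 1) ≤ p) :
    (∀ t ∈ Set.Icc (0:ℝ) 1,
        0 ≤ (p - q) * t ^ (2 * p) + p ^ 2 / ((p - 1) * q) * t ^ (2 * p - 2)
            + (2 * q - p - p * q) * t ^ p + (p - 1) * q - p ^ 2 / ((p - 1) * q)) ∧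
      (p - q) * (1:ℝ) ^ (2 * p) + p ^ 2 / ((p - 1) * q) * (1:ℝ) ^ (2 * p - 2)
          + (2 * q - p - p * q) * (1:ℝ) ^ p + (p - 1) * q - p ^ 2 / ((p - 1) * q) = 0 := by
  have hpq : q ≤ p * (q - 1) := (div_le_iff₀ (by linarith)).mp hp
  have hp1 : 1 < p := by nlinarith
  exact ⟨fun t ht => redhefferG_nonneg hp1 (by linarith) hq ht, redhefferG_one p q⟩
end

section
/- For all x with 0 < x < π, (π² − x²)/(π² + x²) < cos(x/2). -/
/-!
Put `t = tan (x / 4)`. Since `tan` is strictly convex on `[0, π/2)` with `tan 0 = 0` and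
`tan (π/4) = 1`, its graph lies below the chord on `(0, π/4)`, so `0 < t < x / π`. The
half-angle formula `cos (x / 2) = (1 - t²) / (1 + t²)` is strictly decreasing in `t²`, and at
`t = x / π` its right-hand side is `(π² - x²) / (π² + x²)`.
-/

open Real Set

namespace Real

theorem strictConvexOn_tan : StrictConvexOn ℝ (Ico 0 (π / 2)) tan := by
  have hcos_pos : ∀ x ∈ Ico 0 (π / 2), 0 < cos x := fun x hx =>
    cos_pos_of_mem_Ioo ⟨by linarith [pi_pos, hx.1], hx.2⟩
  refine StrictMonoOn.strictConvexOn_of_deriv (convex_Ico _ _)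
    (continuousOn_tan.mono fun x hx => (hcos_pos x hx).ne') ?_
  rw [interior_Ico]
  intro x hx y hy hxy
  simp only [deriv_tan]
  have hcos_lt : cos y < cos x := cos_lt_cos_of_nonneg_of_le_pi_div_two hx.1.le hy.2.le hxy
  have hcos_y : 0 < cos y := hcos_pos y (Ioo_subset_Ico_self hy)
  gcongr

theorem tan_lt_mul {x : ℝ} (hx : 0 < x) (hx' : x < π / 4) : tan x < 4 / π * x := by
  have hw_pos : 0 < 4 / π * x := by positivity
  have hw_lt_one : 4 / π * x < 1 := by
    rw [div_mul_eq_mul_div, div_lt_one pi_pos]; linarith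
  have hchord := strictConvexOn_tan.2 (x := 0) (y := π / 4)
    ⟨le_rfl, by positivity⟩ ⟨by positivity, by linarith [pi_pos]⟩ (by positivity)
    (sub_pos.2 hw_lt_one) hw_pos (sub_add_cancel 1 _)
  have hx_eq : (1 - 4 / π * x) • (0 : ℝ) + (4 / π * x) • (π / 4) = x := by
    rw [smul_zero, zero_add, smul_eq_mul]
    field_simp
  rwa [hx_eq, tan_zero, tan_pi_div_four, smul_zero, zero_add, smul_eq_mul, mul_one] at hchord

end Real

theorem redheffer_cos (x : ℝ) (hx : 0 < x) (hxpi : x < π) :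
    (π ^ 2 - x ^ 2) / (π ^ 2 + x ^ 2) < Real.cos (x / 2) := by
  have ht_pos : 0 < tan (x / 4) := tan_pos_of_pos_of_lt_pi_div_two (by positivity) (by linarith)
  have ht_lt : π * tan (x / 4) < x := by
    have := tan_lt_mul (x := x / 4) (by positivity) (by linarith)
    rwa [show 4 / π * (x / 4) = x / π by ring, lt_div_iff₀' pi_pos] at this
  have hcos : cos (x / 2) = (1 - tan (x / 4) ^ 2) / (1 + tan (x / 4) ^ 2) := by
    have hcos_pos : 0 < cos (x / 2) := cos_pos_of_mem_Ioo ⟨by linarith [pi_pos], by linarith⟩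
    rw [cos_eq_two_mul_tan_half_div_one_sub_tan_half_sq _ (by linarith), div_div]
    norm_num
  have ht_sq : (π * tan (x / 4)) ^ 2 < x ^ 2 := by gcongr
  rw [hcos, div_lt_div_iff₀ (by positivity) (by positivity)]
  linarith
end
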